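/- arXiv:2206.03539 — 4 statements merged into one kernel-verified Lean document; each statement's English description precedes it below -/
import Mathlib

section
/- Let r ∈ [0,π), k ≥ 0, and let Θ ⊆ S¹ be a nonempty finite set with diam(Θ) ≤ r. (i) If there exist distinct points θ_0,…,θ_{2k} ∈ Θ such that the 4k+2 points θ_0,…,θ_{2k} (colored blue) together with their antipodes θ_0+π,…,θ_{2k}+π (colored red) are pairwise distinct and alternate in color in cyclic order around S¹, then arcs_r(Θ) ≥ 2k+1. (ii) Conversely, if arcs_r(Θ) = 2k+1 and θ_0,…,θ_{2k} are points of Θ lying in pairwise distinct (Θ,r)-arcs, then the points θ_0,…,θ_{2k} (colored blue) together with their antipodes (colored red) alternate in color in cyclic order around S¹. -/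
open MeasureTheory Metric Filter
open scoped unitInterval

noncomputable section

/-- The circle of circumference `2π`, modeled as `ℝ/2πℤ` with the quotient (geodesic) metric. -/
abbrev S1 : Type := AddCircle (2 * Real.pi)

instance : Fact (0 < 2 * Real.pi) := ⟨by positivity⟩

/-- A closed arc of the circle: the image of a closed interval `[a,b]` (with
`a ≤ b < a + 2π`, so possibly a single point) under the projection `ℝ → ℝ/2πℤ`. -/
def IsClosedArc (A : Set S1) : Prop :=
  ∃ a b : ℝ, a ≤ b ∧ b < a + 2 * Real.pi ∧ A = (fun t : ℝ => (t : S1)) '' Set.Icc a b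

/-- A point `x` is excluded by `Θ` (at scale `r`) if its distance from some point
of `Θ` exceeds `r`. -/
def ExcludedBy (r : ℝ) (Θ : Set S1) (x : S1) : Prop :=
  ∃ θ ∈ Θ, r < dist θ x

/-- A `(Θ,r)`-arc: a closed arc, maximal among closed arcs that contain at least one
point of `Θ` and contain no point excluded by `Θ`. -/
def IsArc (r : ℝ) (Θ : Set S1) (A : Set S1) : Prop :=
  IsClosedArc A ∧ (A ∩ Θ).Nonempty ∧ (∀ x ∈ A, ¬ ExcludedBy r Θ x) ∧
    ∀ B : Set S1, IsClosedArc B → (B ∩ Θ).Nonempty → (∀ x ∈ B, ¬ ExcludedBy r Θ x) →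
      A ⊆ B → A = B

/-- `arcs_r(Θ)`: the number of `(Θ,r)`-arcs. -/
def arcsCount (r : ℝ) (Θ : Set S1) : ℕ :=
  Set.ncard {A : Set S1 | IsArc r Θ A}
/-- `A` is one of the two open arcs from `x` to `y` (read counterclockwise from `x` to `y`). -/
def IsOpenArcFromTo (x y : S1) (A : Set S1) : Prop :=
  ∃ a b : ℝ, (a : S1) = x ∧ (b : S1) = y ∧ a < b ∧ b < a + 2 * Real.pi ∧
    A = (fun t : ℝ => (t : S1)) '' Set.Ioo a b

/-- Two finite collections of points, `B` colored blue and `R` colored red, alternate in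
color in cyclic order around the circle: the points are pairwise distinct, and between any
two distinct points of the same color (on either of the two open arcs determined by them)
there is a point of the opposite color. -/
def AlternateColors (B R : Set S1) : Prop :=
  Disjoint B R ∧
  (∀ x ∈ B, ∀ y ∈ B, x ≠ y → ∀ A : Set S1, IsOpenArcFromTo x y A → (A ∩ R).Nonempty) ∧
  (∀ x ∈ R, ∀ y ∈ R, x ≠ y → ∀ A : Set S1, IsOpenArcFromTo x y A → (A ∩ B).Nonempty)


/-! Let `N` be the set of points not excluded by `Θ`. It is closed, contains `Θ` (as
`diam Θ ≤ r`) and misses every antipode `θ + π` (as `r < π`). If `t` lifts `θ ∈ Θ`, the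
`(Θ,r)`-arc through `θ` is the image of the connected component of `t` in the preimage of `N`
in `ℝ`, a closed interval strictly between `t - π` and `t + π`; so each point of `Θ` lies on
exactly one arc and there are finitely many arcs.

(i) An arc through two blue points contains an open arc between them, hence a red point, which
is excluded.

(ii) Let `x, y ∈ Θ` lie on different arcs, let `a` lift `x` and `b ∈ (a, a + 2π)` lift `y`, and
lift `Θ` into `[a - r, a + r]`. The smallest lift `w` satisfies `w < b - π`, since otherwise
`[a, b]` would be a non-excluded arc through `x` and `y`. The arc through the point lifted to
`w` lies in `(a - π, a + π)` and cannot reach `b - π`, a lift of the excluded point `y + π`;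
hence the antipode of every point of `Θ` on it lies on the open arc from `x` to `y`. When the
given arcs exhaust all arcs, this arc is one of them. -/

open Set Real

namespace S1

theorem dist_coe_coe_le (s t : ℝ) : dist (s : S1) t ≤ |s - t| := by
  rw [dist_eq_norm, ← AddCircle.coe_sub]
  exact QuotientAddGroup.norm_mk_le_norm (S := AddSubgroup.zmultiples (2 * π)) (m := s - t)

theorem dist_coe_coe_of_abs_le {s t : ℝ} (h : |s - t| ≤ π) : dist (s : S1) t = |s - t| := by
  rw [dist_eq_norm, ← AddCircle.coe_sub, AddCircle.norm_coe_eq_abs_iff _ (by positivity)]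
  rwa [abs_of_pos (by positivity : (0 : ℝ) < 2 * π), mul_div_cancel_left₀ _ two_ne_zero]

theorem dist_add_pi (x : S1) : dist x (x + π) = π := by
  have h : ‖(π : S1)‖ = |π| := (AddCircle.norm_coe_eq_abs_iff _ (by positivity)).2 <| by
    rw [abs_of_pos pi_pos, abs_of_pos (by positivity)]; linarith
  rw [dist_eq_norm, sub_add_cancel_left, norm_neg, h, abs_of_pos pi_pos]

theorem add_pi_add_pi (x : S1) : x + π + π = x := by
  rw [add_assoc, ← AddCircle.coe_add, ← two_mul, AddCircle.coe_period, add_zero]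

theorem coe_sub_pi (t : ℝ) : ((t - π : ℝ) : S1) = t + π := by
  rw [← AddCircle.coe_add_period, ← AddCircle.coe_add]
  ring_nf

theorem coe_sub_zsmul (t : ℝ) (n : ℤ) : ((t - n • (2 * π) : ℝ) : S1) = t := by
  rw [AddCircle.coe_sub, AddCircle.coe_zsmul, AddCircle.coe_period, smul_zero, sub_zero]

theorem eq_of_coe_eq {s t : ℝ} (h : (s : S1) = t) (hst : |s - t| < 2 * π) : s = t := by
  wlog hle : s ≤ t generalizing s t
  · exact (this h.symm (abs_sub_comm s t ▸ hst) (le_of_not_ge hle)).symm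
  exact (AddCircle.coe_eq_coe_iff_of_mem_Ico ⟨le_rfl, by linarith [pi_pos]⟩
    ⟨hle, by linarith [(abs_lt.1 hst).1]⟩).1 h

theorem exists_coe_eq_abs_sub_le (x : S1) (c : ℝ) : ∃ t : ℝ, (t : S1) = x ∧ |t - c| ≤ π := by
  obtain ⟨s, rfl⟩ := QuotientAddGroup.mk_surjective x
  have hp : (0 : ℝ) < 2 * π := by positivity
  have hmem := toIocMod_mem_Ioc hp (c - π) s
  refine ⟨toIocMod hp (c - π) s, coe_sub_zsmul s _, abs_le.2 ⟨?_, ?_⟩⟩ <;>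
    linarith [hmem.1, hmem.2]

theorem image_coe_Icc_sub_zsmul (a b : ℝ) (n : ℤ) :
    ((↑) : ℝ → S1) '' Icc (a - n • (2 * π)) (b - n • (2 * π)) = ((↑) : ℝ → S1) '' Icc a b := by
  rw [← image_sub_const_Icc, image_image]
  exact image_congr fun s _ => coe_sub_zsmul s n

end S1

theorem Real.exists_connectedComponentIn_eq_Icc {F : Set ℝ} (hF : IsClosed F) {c t d : ℝ}
    (hc : c ∉ F) (ht : t ∈ F) (hd : d ∉ F) (hct : c < t) (htd : t < d) :
    ∃ α β, c < α ∧ β < d ∧ connectedComponentIn F t = Icc α β := by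
  set K := connectedComponentIn F t
  have hKF : K ⊆ F := connectedComponentIn_subset F t
  have htK : t ∈ K := mem_connectedComponentIn ht
  have hK : K.OrdConnected := isPreconnected_connectedComponentIn.ordConnected
  have hKcd : K ⊆ Ioo c d := fun s hs => by
    by_contra! h
    rcases not_and_or.1 h with h | h
    · exact hc (hKF (hK.out hs htK ⟨not_lt.1 h, hct.le⟩))
    · exact hd (hKF (hK.out htK hs ⟨htd.le, not_lt.1 h⟩))
  have hKclosed : IsClosed K := closure_subset_iff_isClosed.1 <|
    isPreconnected_connectedComponentIn.closure.subset_connectedComponentIn (subset_closure htK)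
      (hF.closure_subset_iff.2 hKF)
  have hKcompact : IsCompact K :=
    isCompact_Icc.of_isClosed_subset hKclosed (hKcd.trans Ioo_subset_Icc_self)
  obtain ⟨α, hαK, hα⟩ := hKcompact.exists_isLeast ⟨t, htK⟩
  obtain ⟨β, hβK, hβ⟩ := hKcompact.exists_isGreatest ⟨t, htK⟩
  exact ⟨α, β, (hKcd hαK).1, (hKcd hβK).2,
    subset_antisymm (fun s hs => ⟨hα hs, hβ hs⟩) (hK.out hαK hβK)⟩

theorem IsClosedArc.exists_eq_image_Icc_of_notMem {B : Set S1} (hB : IsClosedArc B) {c : ℝ}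
    (hc : (c : S1) ∉ B) : ∃ a b, c - 2 * π < a ∧ b < c ∧ B = ((↑) : ℝ → S1) '' Icc a b := by
  obtain ⟨a₀, b₀, -, -, rfl⟩ := hB
  have hp : (0 : ℝ) < 2 * π := by positivity
  have ha := toIocMod_mem_Ioc hp (c - 2 * π) a₀
  rw [toIocMod, sub_add_cancel] at ha
  set n := toIocDiv hp (c - 2 * π) a₀
  rw [← S1.image_coe_Icc_sub_zsmul a₀ b₀ n] at hc ⊢
  exact ⟨_, _, ha.1, lt_of_not_ge fun hb => hc ⟨c, ⟨ha.2, hb⟩, rfl⟩, rfl⟩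

theorem IsClosedArc.exists_isOpenArcFromTo_subset {A : Set S1} (hA : IsClosedArc A) {x y : S1}
    (hx : x ∈ A) (hy : y ∈ A) (hxy : x ≠ y) :
    ∃ O ⊆ A, IsOpenArcFromTo x y O ∨ IsOpenArcFromTo y x O := by
  obtain ⟨a, b, -, hba, rfl⟩ := hA
  obtain ⟨s, hs, rfl⟩ := hx
  obtain ⟨t, ht, rfl⟩ := hy
  rcases lt_or_gt_of_ne (ne_of_apply_ne _ hxy) with hst | hts
  · exact ⟨_, image_mono (Ioo_subset_Icc_self.trans (Icc_subset_Icc hs.1 ht.2)),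
      .inl ⟨s, t, rfl, rfl, hst, by linarith [hs.1, ht.2], rfl⟩⟩
  · exact ⟨_, image_mono (Ioo_subset_Icc_self.trans (Icc_subset_Icc ht.1 hs.2)),
      .inr ⟨t, s, rfl, rfl, hts, by linarith [ht.1, hs.2], rfl⟩⟩

theorem IsOpenArcFromTo.add {x y : S1} {O : Set S1} (hO : IsOpenArcFromTo x y O) (c : ℝ) :
    IsOpenArcFromTo (x + c) (y + c) ((· + (c : S1)) '' O) := by
  obtain ⟨a, b, rfl, rfl, hab, hba, rfl⟩ := hO
  refine ⟨a + c, b + c, AddCircle.coe_add _ a c, AddCircle.coe_add _ b c, by linarith,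
    by linarith, ?_⟩
  rw [image_image, ← image_add_const_Ioo, image_image]
  exact image_congr fun s _ => (AddCircle.coe_add _ s c).symm

def allowed (r : ℝ) (Θ : Set S1) : Set S1 := {x | ¬ ExcludedBy r Θ x}

section Arcs

variable {r : ℝ} {Θ : Set S1}

theorem mem_allowed {x : S1} : x ∈ allowed r Θ ↔ ∀ θ ∈ Θ, dist θ x ≤ r := by
  simp [allowed, ExcludedBy]

theorem isClosed_allowed : IsClosed (allowed r Θ) := by
  have : allowed r Θ = ⋂ θ ∈ Θ, closedBall θ r := by
    ext x
    simp [mem_allowed, dist_comm]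
  rw [this]
  exact isClosed_biInter fun θ _ => isClosed_closedBall

theorem subset_allowed (hdiam : diam Θ ≤ r) : Θ ⊆ allowed r Θ := fun _ hx =>
  mem_allowed.2 fun _ hθ => (dist_le_diam_of_mem isBounded_of_compactSpace hθ hx).trans hdiam

theorem add_pi_notMem_allowed (hrπ : r < π) {x : S1} (hx : x ∈ Θ) : x + π ∉ allowed r Θ :=
  fun h => (S1.dist_add_pi x ▸ mem_allowed.1 h x hx).not_gt hrπ

theorem exists_isArc_of_mem (hrπ : r < π) (hdiam : diam Θ ≤ r) {x : S1} (hx : x ∈ Θ) :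
    ∃ A, IsArc r Θ A ∧ x ∈ A ∧ ∀ B, IsClosedArc B → B ⊆ allowed r Θ → x ∈ B → B ⊆ A := by
  obtain ⟨t, rfl⟩ := QuotientAddGroup.mk_surjective x
  have hanti : ((t + π : ℝ) : S1) ∉ allowed r Θ := by
    rw [AddCircle.coe_add]
    exact add_pi_notMem_allowed hrπ hx
  obtain ⟨α, β, hα, hβ, hK⟩ :=
    Real.exists_connectedComponentIn_eq_Icc (F := ((↑) : ℝ → S1) ⁻¹' allowed r Θ)
      (isClosed_allowed.preimage (continuous_quotient_mk' : Continuous ((↑) : ℝ → S1)))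
      (c := t - π) (d := t + π) (by rwa [mem_preimage, S1.coe_sub_pi, ← AddCircle.coe_add])
      (subset_allowed hdiam hx) hanti (by linarith [pi_pos]) (by linarith [pi_pos])
  have ht : t ∈ Icc α β := hK ▸ mem_connectedComponentIn (subset_allowed hdiam hx)
  have habsorb : ∀ B, IsClosedArc B → B ⊆ allowed r Θ → (t : S1) ∈ B →
      B ⊆ ((↑) : ℝ → S1) '' Icc α β := by
    intro B hB hBa htB
    obtain ⟨a, b, ha, hb, rfl⟩ := hB.exists_eq_image_Icc_of_notMem fun h => hanti (hBa h)
    obtain ⟨s, hs, hst⟩ := htB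
    obtain rfl : s = t := S1.eq_of_coe_eq hst
      (abs_lt.2 ⟨by linarith [hs.1, pi_pos], by linarith [hs.2, pi_pos]⟩)
    rw [← hK]
    exact image_mono (isPreconnected_Icc.subset_connectedComponentIn hs (image_subset_iff.1 hBa))
  have hA : ((↑) : ℝ → S1) '' Icc α β ⊆ allowed r Θ :=
    image_subset_iff.2 (hK ▸ connectedComponentIn_subset _ _)
  refine ⟨_, ⟨⟨α, β, ht.1.trans ht.2, by linarith, rfl⟩, ⟨t, ⟨t, ht, rfl⟩, hx⟩, fun y hy => hA hy,
    fun B hB _ hBa hAB => (habsorb B hB hBa (hAB ⟨t, ht, rfl⟩)).antisymm' hAB⟩, ⟨t, ht, rfl⟩,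
    habsorb⟩

theorem IsArc.subset_of_mem (hrπ : r < π) (hdiam : diam Θ ≤ r) {A B : Set S1} {x : S1}
    (hA : IsArc r Θ A) (hxA : x ∈ A) (hx : x ∈ Θ) (hB : IsClosedArc B) (hBa : B ⊆ allowed r Θ)
    (hxB : x ∈ B) : B ⊆ A := by
  obtain ⟨A₀, hA₀, -, habsorb⟩ := exists_isArc_of_mem hrπ hdiam hx
  rw [hA.2.2.2 A₀ hA₀.1 hA₀.2.1 hA₀.2.2.1 (habsorb A hA.1 (fun y hy => hA.2.2.1 y hy) hxA)]
  exact habsorb B hB hBa hxB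

theorem IsArc.eq_of_mem (hrπ : r < π) (hdiam : diam Θ ≤ r) {A A' : Set S1} {x : S1}
    (hA : IsArc r Θ A) (hA' : IsArc r Θ A') (hx : x ∈ Θ) (hxA : x ∈ A) (hxA' : x ∈ A') :
    A = A' :=
  (hA'.subset_of_mem hrπ hdiam hxA' hx hA.1 (fun y hy => hA.2.2.1 y hy) hxA).antisymm
    (hA.subset_of_mem hrπ hdiam hxA hx hA'.1 (fun y hy => hA'.2.2.1 y hy) hxA')

theorem finite_setOf_isArc (hrπ : r < π) (hfin : Θ.Finite) (hdiam : diam Θ ≤ r) :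
    {A | IsArc r Θ A}.Finite := by
  refine (hfin.biUnion fun x hx => Subsingleton.finite (s := {A | IsArc r Θ A ∧ x ∈ A})
    fun A hA A' hA' => hA.1.eq_of_mem hrπ hdiam hA'.1 hx hA.2 hA'.2).subset fun A hA => ?_
  obtain ⟨x, hxA, hx⟩ := hA.2.1
  exact mem_biUnion hx ⟨hA, hxA⟩

theorem IsArc.notMem_of_alternateColors (hrπ : r < π) {B : Set S1} (hBΘ : B ⊆ Θ)
    (halt : AlternateColors B ((· + (π : S1)) '' B)) {A : Set S1} (hA : IsArc r Θ A) {x y : S1}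
    (hx : x ∈ B) (hy : y ∈ B) (hxy : x ≠ y) (hxA : x ∈ A) : y ∉ A := by
  intro hyA
  obtain ⟨O, hOA, hO⟩ := hA.1.exists_isOpenArcFromTo_subset hxA hyA hxy
  obtain ⟨_, hzO, z, hz, rfl⟩ :=
    hO.elim (halt.2.1 x hx y hy hxy O) (halt.2.1 y hy x hx hxy.symm O)
  exact add_pi_notMem_allowed hrπ (hBΘ hz) (hA.2.2.1 _ (hOA hzO))

theorem le_arcsCount_of_alternateColors (hrπ : r < π) (hfin : Θ.Finite) (hdiam : diam Θ ≤ r)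
    {n : ℕ} {θ : Fin n → S1} (hθ : Function.Injective θ) (hθΘ : ∀ i, θ i ∈ Θ)
    (halt : AlternateColors (range θ) ((· + (π : S1)) '' range θ)) : n ≤ arcsCount r Θ := by
  choose A hA hθA _ using fun i => exists_isArc_of_mem hrπ hdiam (hθΘ i)
  have hAinj : Function.Injective A := fun i j hij => hθ <| by_contra fun hne =>
    (hA j).notMem_of_alternateColors hrπ (range_subset_iff.2 hθΘ) halt ⟨i, rfl⟩ ⟨j, rfl⟩ hne
      (hij ▸ hθA i) (hθA j)
  calc n = (range A).ncard := by rw [ncard_range_of_injective hAinj, Nat.card_fin]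
    _ ≤ arcsCount r Θ :=
      ncard_le_ncard (range_subset_iff.2 hA) (finite_setOf_isArc hrπ hfin hdiam)

theorem exists_isArc_add_pi_mem (hrπ : r < π) (hfin : Θ.Finite) (hdiam : diam Θ ≤ r)
    {x y : S1} (hx : x ∈ Θ) (hy : y ∈ Θ) {A : Set S1} (hA : IsArc r Θ A) (hxA : x ∈ A)
    (hyA : y ∉ A) {O : Set S1} (hO : IsOpenArcFromTo x y O) :
    ∃ C, IsArc r Θ C ∧ ∀ z ∈ C ∩ Θ, z + π ∈ O := by
  obtain ⟨a, b, rfl, rfl, hab, hba, rfl⟩ := hO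
  have hlift : ∀ ψ ∈ Θ, ∃ t : ℝ, (t : S1) = ψ ∧ |t - a| ≤ r := fun ψ hψ => by
    obtain ⟨t, rfl, ht⟩ := S1.exists_coe_eq_abs_sub_le ψ a
    refine ⟨t, rfl, ?_⟩
    rw [← S1.dist_coe_coe_of_abs_le ht, dist_comm]
    exact mem_allowed.1 (subset_allowed hdiam hψ) _ hx
  choose! τ hτ hτa using hlift
  obtain ⟨φ, hφ, hφmin⟩ := exists_min_image Θ τ hfin ⟨_, hx⟩
  obtain ⟨C, hC, hφC, -⟩ := exists_isArc_of_mem hrπ hdiam hφ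
  refine ⟨C, hC, ?_⟩
  have hφb : τ φ < b - π := by
    by_contra! hφb
    refine hyA (hA.subset_of_mem hrπ hdiam hxA hx ⟨a, b, hab.le, hba, rfl⟩ ?_
      ⟨a, ⟨le_rfl, hab.le⟩, rfl⟩ ⟨b, ⟨hab.le, le_rfl⟩, rfl⟩)
    rintro _ ⟨s, hs, rfl⟩
    refine mem_allowed.2 fun ψ hψ => ?_
    have h₁ := abs_le.1 (hτa ψ hψ)
    have h₂ : |τ ψ - b| ≤ r := by
      rw [← S1.dist_coe_coe_of_abs_le (abs_le.2 ⟨by linarith [hφmin ψ hψ], by linarith⟩),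
        hτ ψ hψ]
      exact mem_allowed.1 (subset_allowed hdiam hy) _ hψ
    rw [← hτ ψ hψ]
    refine (S1.dist_coe_coe_le _ _).trans (abs_le.2 ⟨?_, ?_⟩) <;>
      linarith [abs_le.1 h₂, hs.1, hs.2]
  obtain ⟨a₁, b₁, ha₁, hb₁, rfl⟩ := hC.1.exists_eq_image_Icc_of_notMem (c := a + π)
    fun h => add_pi_notMem_allowed hrπ hx (AddCircle.coe_add _ a π ▸ hC.2.2.1 _ h)
  have hτmem : ∀ ψ ∈ ((↑) : ℝ → S1) '' Icc a₁ b₁, ψ ∈ Θ → τ ψ ∈ Icc a₁ b₁ := by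
    rintro _ ⟨s, hs, rfl⟩ hψ
    have hψa := abs_le.1 (hτa _ hψ)
    rwa [← S1.eq_of_coe_eq (hτ _ hψ).symm
      (abs_lt.2 ⟨by linarith [hs.1], by linarith [hs.2, pi_pos]⟩)]
  rintro z ⟨hzC, hz⟩
  have hzb : τ z < b - π := by
    by_contra! hzb
    refine add_pi_notMem_allowed hrπ hy (S1.coe_sub_pi b ▸ hC.2.2.1 _ ⟨b - π, ⟨?_, ?_⟩, rfl⟩)
    · linarith [(hτmem φ hφC hφ).1]
    · linarith [(hτmem z hzC hz).2]
  refine ⟨τ z + π, ⟨by linarith [abs_le.1 (hτa z hz)], by linarith⟩, ?_⟩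
  show ((τ z + π : ℝ) : S1) = z + π
  rw [AddCircle.coe_add, hτ z hz]

theorem alternateColors_of_arcsCount_le (hrπ : r < π) (hfin : Θ.Finite) (hdiam : diam Θ ≤ r)
    {n : ℕ} (hn : arcsCount r Θ ≤ n) {θ : Fin n → S1} (hθΘ : ∀ i, θ i ∈ Θ)
    {A : Fin n → Set S1} (hA : ∀ i, IsArc r Θ (A i)) (hAinj : Function.Injective A)
    (hθA : ∀ i, θ i ∈ A i) : AlternateColors (range θ) ((· + (π : S1)) '' range θ) := by
  have hall : range A = {C | IsArc r Θ C} :=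
    eq_of_subset_of_ncard_le (range_subset_iff.2 hA)
      (by rwa [ncard_range_of_injective hAinj, Nat.card_fin]) (finite_setOf_isArc hrπ hfin hdiam)
  have hsep : ∀ i j, θ i ≠ θ j → ∀ O, IsOpenArcFromTo (θ i) (θ j) O → ∃ l, θ l + π ∈ O := by
    intro i j hij O hO
    have hjA : θ j ∉ A i := fun h =>
      hij (congrArg θ (hAinj ((hA i).eq_of_mem hrπ hdiam (hA j) (hθΘ j) h (hθA j))))
    obtain ⟨C, hC, hCO⟩ :=
      exists_isArc_add_pi_mem hrπ hfin hdiam (hθΘ i) (hθΘ j) (hA i) (hθA i) hjA hO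
    obtain ⟨l, rfl⟩ : C ∈ range A := hall ▸ hC
    exact ⟨l, hCO _ ⟨hθA l, hθΘ l⟩⟩
  refine ⟨?_, ?_, ?_⟩
  · rw [disjoint_left]
    rintro _ ⟨i, rfl⟩ ⟨_, ⟨j, rfl⟩, hji⟩
    refine add_pi_notMem_allowed hrπ (hθΘ j) ?_
    rw [show θ j + π = θ i from hji]
    exact subset_allowed hdiam (hθΘ i)
  · rintro _ ⟨i, rfl⟩ _ ⟨j, rfl⟩ hij O hO
    obtain ⟨l, hl⟩ := hsep i j hij O hO
    exact ⟨_, hl, mem_image_of_mem _ (mem_range_self l)⟩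
  · rintro _ ⟨_, ⟨i, rfl⟩, rfl⟩ _ ⟨_, ⟨j, rfl⟩, rfl⟩ hij O hO
    have hO' := hO.add π
    rw [S1.add_pi_add_pi, S1.add_pi_add_pi] at hO'
    obtain ⟨l, hl⟩ := hsep i j (fun h => hij (h ▸ rfl)) _ hO'
    exact ⟨θ l, (add_left_injective _).mem_set_image.1 hl, mem_range_self l⟩

end Arcs

theorem red_blue_points_and_arcs_general (r : ℝ) (hrπ : r < Real.pi) (k : ℕ)
    (Θ : Set S1) (hfin : Θ.Finite) (hdiam : Metric.diam Θ ≤ r) :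
    ((∃ θ : Fin (2 * k + 1) → S1, Function.Injective θ ∧ (∀ i, θ i ∈ Θ) ∧
        AlternateColors (Set.range θ)
          ((fun x => x + ((Real.pi : ℝ) : S1)) '' Set.range θ)) →
      2 * k + 1 ≤ arcsCount r Θ) ∧
    (arcsCount r Θ = 2 * k + 1 →
      ∀ θ : Fin (2 * k + 1) → S1, (∀ i, θ i ∈ Θ) →
      ∀ A : Fin (2 * k + 1) → Set S1, (∀ i, IsArc r Θ (A i)) →
        (∀ i j, i ≠ j → A i ≠ A j) → (∀ i, θ i ∈ A i) →
        AlternateColors (Set.range θ)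
          ((fun x => x + ((Real.pi : ℝ) : S1)) '' Set.range θ)) :=
  ⟨fun ⟨_, hθ, hθΘ, halt⟩ => le_arcsCount_of_alternateColors hrπ hfin hdiam hθ hθΘ halt,
    fun hn _ hθΘ _ hA hAne hθA => alternateColors_of_arcsCount_le hrπ hfin hdiam hn.le hθΘ hA
      (fun i j hij => by_contra fun h => hAne i j h hij) hθA⟩

/-- Let `r ∈ [0,π)`, `k ≥ 0`, and `Θ ⊆ S¹` nonempty finite with
`diam Θ ≤ r`.
(i) If there are distinct points `θ_0, …, θ_{2k} ∈ Θ` such that these blue points together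
with their red antipodes are pairwise distinct and alternate in color in cyclic order,
then `arcs_r(Θ) ≥ 2k+1`.
(ii) Conversely, if `arcs_r(Θ) = 2k+1` and `θ_0, …, θ_{2k} ∈ Θ` lie in pairwise distinct
`(Θ,r)`-arcs, then the blue points together with their red antipodes alternate in color
in cyclic order. -/
theorem red_blue_points_and_arcs (r : ℝ) (hr0 : 0 ≤ r) (hrπ : r < Real.pi) (k : ℕ)
    (Θ : Set S1) (hne : Θ.Nonempty) (hfin : Θ.Finite) (hdiam : Metric.diam Θ ≤ r) :
    ((∃ θ : Fin (2 * k + 1) → S1, Function.Injective θ ∧ (∀ i, θ i ∈ Θ) ∧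
        AlternateColors (Set.range θ)
          ((fun x => x + ((Real.pi : ℝ) : S1)) '' Set.range θ)) →
      2 * k + 1 ≤ arcsCount r Θ) ∧
    (arcsCount r Θ = 2 * k + 1 →
      ∀ θ : Fin (2 * k + 1) → S1, (∀ i, θ i ∈ Θ) →
      ∀ A : Fin (2 * k + 1) → Set S1, (∀ i, IsArc r Θ (A i)) →
        (∀ i j, i ≠ j → A i ≠ A j) → (∀ i, θ i ∈ A i) →
        AlternateColors (Set.range θ)
          ((fun x => x + ((Real.pi : ℝ) : S1)) '' Set.range θ)) :=
  red_blue_points_and_arcs_general r hrπ k Θ hfin hdiam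
end
end

section
/- Let r ∈ [0,π), k ≥ 0, and μ ∈ V_{2k+1}(r). There is a neighborhood U of μ in VRm(S¹;r) such that every ν ∈ U satisfies arcs_r(ν) ≥ 2k+1; equivalently, U is disjoint from W_{2k−1}(r). -/
open MeasureTheory Metric Filter
open scoped unitInterval

noncomputable section

/-- The set of atoms of a probability measure. -/
def suppSet {X : Type*} [MeasurableSpace X] (μ : ProbabilityMeasure X) : Set X :=
  {x | μ {x} ≠ 0}

/-- Finitely supported Borel probability measures, topologized as a subspace of the
space of Borel probability measures with the topology of weak convergence. -/
abbrev Pfin (X : Type*) [MeasurableSpace X] : Type _ :=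
  {μ : ProbabilityMeasure X // ∃ S : Finset X, μ (↑S : Set X) = 1}

/-- The Vietoris–Rips metric thickening of the circle at scale `r`:
finitely supported probability measures whose support has diameter at most `r`. -/
def VRm (r : ℝ) : Set (Pfin S1) :=
  {μ | Metric.diam (suppSet μ.1) ≤ r}


/-- `arcs_r(μ)` for a finitely supported measure: the number of `(supp μ, r)`-arcs. -/
def arcsCountM (r : ℝ) (μ : Pfin S1) : ℕ :=
  arcsCount r (suppSet μ.1)

/-- `V_{2k+1}(r)`: measures in the metric thickening with exactly `2k+1` arcs. -/
def V (r : ℝ) (k : ℕ) : Set (Pfin S1) :=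
  {μ ∈ VRm r | arcsCountM r μ = 2 * k + 1}

/-- `W_{2k+1}(r)`: measures in the metric thickening with at most `2k+1` arcs. -/
def W (r : ℝ) (k : ℕ) : Set (Pfin S1) :=
  {μ ∈ VRm r | arcsCountM r μ ≤ 2 * k + 1}

/-!
Lift everything to `ℝ` around a lift `c` of a point of `Θ`. Since `diam Θ ≤ r < π`, every
non-excluded point lies within `r` of `c`, so the `(Θ,r)`-arcs are the images of those
connected components of the closed set `{u ∈ [c - r, c + r] | u not excluded}` that meet a
lift of `Θ`, and two such components are distinct exactly when an excluded point lies between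
them. An excluded point `u` between two lifts `t < t'` of `Θ` is witnessed by some `θ ∈ Θ`
with `dist θ u > r`, a strict, hence robust, inequality: if every atom of `μ` has an atom of
`ν` nearby, then atoms of `ν` near `t` and `t'` are still separated by `u`, now excluded by
the atom of `ν` near `θ`. So distinct arcs of `μ` give distinct arcs of `ν`.
-/

open Set Real Topology

lemma IsClosed.connectedComponentIn {X : Type*} [TopologicalSpace X] {F : Set X}
    (hF : IsClosed F) (x : X) : IsClosed (connectedComponentIn F x) := by
  by_cases hx : x ∈ F
  · refine isClosed_of_closure_subset <| isPreconnected_connectedComponentIn.closure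
      |>.subset_connectedComponentIn (subset_closure (mem_connectedComponentIn hx)) ?_
    exact closure_minimal (connectedComponentIn_subset F x) hF
  · rw [connectedComponentIn_eq_empty hx]
    exact isClosed_empty

lemma Set.ncard_image_le_ncard_image_of_eq_imp_eq {α β γ : Type*} {f : α → β} {g : α → γ}
    {s : Set α} (hg : (g '' s).Finite) (hfg : ∀ x ∈ s, ∀ y ∈ s, g x = g y → f x = f y) :
    (f '' s).ncard ≤ (g '' s).ncard := by
  rcases s.eq_empty_or_nonempty with rfl | ⟨x₀, -⟩
  · simp
  have : Nonempty α := ⟨x₀⟩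
  have hfactor : f '' s = (f ∘ Function.invFunOn g s) '' (g '' s) := by
    rw [image_image]
    refine image_congr fun x hx => (hfg _ (Function.invFunOn_mem ⟨x, hx, rfl⟩) x hx
      (Function.invFunOn_eq ⟨x, hx, rfl⟩)).symm
  rw [hfactor]
  exact ncard_image_le hg

section Atoms

variable {X : Type*} [MeasurableSpace X]

lemma mem_suppSet_iff (μ : ProbabilityMeasure X) (x : X) :
    x ∈ suppSet μ ↔ (μ : Measure X) {x} ≠ 0 :=
  (ProbabilityMeasure.null_iff_toMeasure_null μ {x}).not

lemma Pfin.exists_finset_compl_null [MeasurableSingletonClass X] (μ : Pfin X) :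
    ∃ S : Finset X, (μ.1 : Measure X) (↑S)ᶜ = 0 := by
  obtain ⟨S, hS⟩ := μ.2
  refine ⟨S, (prob_compl_eq_zero_iff S.finite_toSet.measurableSet).2 ?_⟩
  rw [← ProbabilityMeasure.ennreal_coeFn_eq_coeFn_toMeasure, hS, ENNReal.coe_one]

lemma Pfin.suppSet_finite [MeasurableSingletonClass X] (μ : Pfin X) : (suppSet μ.1).Finite := by
  obtain ⟨S, hS⟩ := μ.exists_finset_compl_null
  refine S.finite_toSet.subset fun x hx => ?_
  by_contra hxS
  exact (mem_suppSet_iff _ x).1 hx (measure_mono_null (singleton_subset_iff.2 hxS) hS)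

lemma Pfin.exists_mem_suppSet_of_ne_zero [MeasurableSingletonClass X] (μ : Pfin X) {G : Set X}
    (hG : (μ.1 : Measure X) G ≠ 0) : ∃ x ∈ suppSet μ.1, x ∈ G := by
  obtain ⟨S, hS⟩ := μ.exists_finset_compl_null
  by_contra! h
  refine hG ?_
  rw [← measure_inter_conull hS, ← biUnion_of_singleton (G ∩ S)]
  exact (measure_biUnion_null_iff ((S.finite_toSet.subset inter_subset_right).countable)).2
    fun x hx => not_not.1 fun hx0 => h x ((mem_suppSet_iff _ x).2 hx0) hx.1

lemma Pfin.suppSet_nonempty [MeasurableSingletonClass X] (μ : Pfin X) :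
    (suppSet μ.1).Nonempty := by
  obtain ⟨x, hx, -⟩ := μ.exists_mem_suppSet_of_ne_zero (G := univ) (by simp)
  exact ⟨x, hx⟩

lemma ProbabilityMeasure.eventually_ne_zero_of_isOpen [TopologicalSpace X]
    [OpensMeasurableSpace X] [HasOuterApproxClosed X] {μ : ProbabilityMeasure X} {G : Set X}
    (hG : IsOpen G) (hμG : (μ : Measure X) G ≠ 0) :
    ∀ᶠ ν : ProbabilityMeasure X in 𝓝 μ, (ν : Measure X) G ≠ 0 :=
  (eventually_lt_of_lt_liminf ((pos_iff_ne_zero.2 hμG).trans_le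
    (ProbabilityMeasure.le_liminf_measure_open_of_tendsto tendsto_id hG))).mono
      fun _ h => h.ne'

lemma Pfin.eventually_exists_mem_suppSet [TopologicalSpace X] [OpensMeasurableSpace X]
    [HasOuterApproxClosed X] [MeasurableSingletonClass X] {μ : Pfin X} {θ : X}
    (hθ : θ ∈ suppSet μ.1) {G : Set X} (hG : IsOpen G) (hθG : θ ∈ G) :
    ∀ᶠ ν : Pfin X in 𝓝 μ, ∃ x ∈ suppSet ν.1, x ∈ G :=
  (continuous_subtype_val.tendsto μ |>.eventually <|
    ProbabilityMeasure.eventually_ne_zero_of_isOpen hG fun h =>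
      (mem_suppSet_iff _ θ).1 hθ (measure_mono_null (singleton_subset_iff.2 hθG) h)).mono
    fun ν => Pfin.exists_mem_suppSet_of_ne_zero ν

end Atoms

section Lifting

lemma S1.dist_coe_eq {u v : ℝ} (h : |u - v| ≤ π) : dist (u : S1) (v : S1) = |u - v| := by
  rw [dist_eq_norm, ← AddCircle.coe_sub, AddCircle.norm_coe_eq_abs_iff _ two_pi_pos.ne',
    abs_of_pos two_pi_pos]
  linarith

lemma S1.exists_lift (c : ℝ) (z : S1) :
    ∃ t : ℝ, (t : S1) = z ∧ |t - c| ≤ π ∧ dist (c : S1) z = |t - c| := by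
  obtain ⟨t, rfl, ht⟩ : ∃ t : ℝ, (t : S1) = z ∧ t ∈ Ioc (c - π) (c - π + 2 * π) :=
    ⟨_, AddCircle.coe_equivIoc, (AddCircle.equivIoc _ _ z).2⟩
  have htc : |t - c| ≤ π := abs_le.2 ⟨by linarith [ht.1], by linarith [ht.2]⟩
  exact ⟨t, rfl, htc, by rw [dist_comm, S1.dist_coe_eq htc]⟩

lemma S1.injOn_coe_Icc {c ρ : ℝ} (hρ : ρ < π) :
    InjOn ((↑) : ℝ → S1) (Icc (c - ρ) (c + ρ)) := by
  intro u hu v hv huv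
  have mem_Ico : ∀ w ∈ Icc (c - ρ) (c + ρ), w ∈ Ico (c - ρ) (c - ρ + 2 * π) :=
    fun w hw => ⟨hw.1, by linarith [hw.2]⟩
  exact (AddCircle.coe_eq_coe_iff_of_mem_Ico (mem_Ico u hu) (mem_Ico v hv)).1 huv

lemma IsClosedArc.exists_Icc_subset {A : Set S1} (hA : IsClosedArc A) {c ρ : ℝ} (hρ : ρ < π)
    (hAc : ∀ z ∈ A, dist (c : S1) z ≤ ρ) :
    ∃ a b : ℝ, Icc a b ⊆ Icc (c - ρ) (c + ρ) ∧ A = (↑) '' Icc a b := by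
  obtain ⟨a', b', hab', -, rfl⟩ := hA
  obtain ⟨a, ha, -, hdist⟩ := S1.exists_lift c (a' : S1)
  have haρ := abs_le.1 (hdist ▸ hAc _ ⟨a', left_mem_Icc.2 hab', rfl⟩)
  have hshift : ∀ x : ℝ, ((x + (a - a') : ℝ) : S1) = x := by simp [ha]
  have himage : ((↑) : ℝ → S1) '' Icc a' b' = (↑) '' Icc a (b' + (a - a')) := by
    have : Icc a (b' + (a - a')) = (· + (a - a')) '' Icc a' b' := by
      rw [image_add_const_Icc, add_sub_cancel]
    rw [this, image_image]
    simp only [hshift]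
  refine ⟨a, b' + (a - a'), Icc_subset_Icc (by linarith) ?_, himage⟩
  by_contra! hb
  -- capping at `c + π` keeps `w` where the circle distance to `c` is `w - c`
  set w := min (b' + (a - a')) (c + π)
  have hw : w ∈ Icc a (b' + (a - a')) :=
    ⟨le_min (by linarith) (by linarith), min_le_left _ _⟩
  have hcw : c + ρ < w := lt_min hb (by linarith)
  have hwA := hAc _ (himage ▸ mem_image_of_mem _ hw)
  have hwπ : w ≤ c + π := min_le_right _ _
  rw [dist_comm, S1.dist_coe_eq (abs_le.2 ⟨by linarith, by linarith⟩),
    abs_of_pos (by linarith)] at hwA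
  linarith

end Lifting

section Arcs

variable {r : ℝ} {Θ : Set S1} {c : ℝ}

def admissibleLifts (r : ℝ) (Θ : Set S1) (c : ℝ) : Set ℝ :=
  {u | u ∈ Icc (c - r) (c + r) ∧ ¬ ExcludedBy r Θ u}

def pointLifts (r : ℝ) (Θ : Set S1) (c : ℝ) : Set ℝ :=
  {t | t ∈ Icc (c - r) (c + r) ∧ (t : S1) ∈ Θ}

def arcThrough (r : ℝ) (Θ : Set S1) (c t : ℝ) : Set S1 :=
  (↑) '' connectedComponentIn (admissibleLifts r Θ c) t

lemma isClosed_admissibleLifts : IsClosed (admissibleLifts r Θ c) := by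
  have : admissibleLifts r Θ c = Icc (c - r) (c + r) ∩ ⋂ θ ∈ Θ, {u : ℝ | dist θ u ≤ r} := by
    ext u
    simp [admissibleLifts, ExcludedBy]
  rw [this]
  exact isClosed_Icc.inter <| isClosed_biInter fun θ _ =>
    isClosed_le (continuous_const.dist (AddCircle.continuous_mk' _)) continuous_const

lemma exists_connectedComponentIn_admissibleLifts_eq_Icc {t : ℝ}
    (ht : t ∈ admissibleLifts r Θ c) :
    ∃ a b, a ≤ b ∧ connectedComponentIn (admissibleLifts r Θ c) t = Icc a b := by
  set C := connectedComponentIn (admissibleLifts r Θ c) t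
  have hC : IsCompact C := isCompact_Icc.of_isClosed_subset
    (isClosed_admissibleLifts.connectedComponentIn t)
    ((connectedComponentIn_subset _ t).trans fun u hu => hu.1)
  have hCeq := eq_Icc_of_connected_compact (isConnected_connectedComponentIn_iff.2 ht) hC
  refine ⟨_, _, ?_, hCeq⟩
  by_contra! h
  rw [Icc_eq_empty h.not_ge] at hCeq
  exact hCeq.subset (mem_connectedComponentIn ht)

lemma connectedComponentIn_admissibleLifts_subset_Icc (t : ℝ) :
    connectedComponentIn (admissibleLifts r Θ c) t ⊆ Icc (c - r) (c + r) :=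
  (connectedComponentIn_subset _ t).trans fun _ hu => hu.1

lemma mem_arcThrough {t : ℝ} (ht : t ∈ admissibleLifts r Θ c) : (t : S1) ∈ arcThrough r Θ c t :=
  mem_image_of_mem _ (mem_connectedComponentIn ht)

lemma not_excludedBy_of_mem_arcThrough {t : ℝ} {x : S1} (hx : x ∈ arcThrough r Θ c t) :
    ¬ ExcludedBy r Θ x := by
  obtain ⟨u, hu, rfl⟩ := hx
  exact (connectedComponentIn_subset _ t hu).2

lemma isClosedArc_arcThrough (hrπ : r < π) {t : ℝ} (ht : t ∈ admissibleLifts r Θ c) :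
    IsClosedArc (arcThrough r Θ c t) := by
  obtain ⟨a, b, hab, hC⟩ := exists_connectedComponentIn_admissibleLifts_eq_Icc ht
  have ha := connectedComponentIn_admissibleLifts_subset_Icc t (hC ▸ left_mem_Icc.2 hab)
  have hb := connectedComponentIn_admissibleLifts_subset_Icc t (hC ▸ right_mem_Icc.2 hab)
  exact ⟨a, b, hab, by linarith [ha.1, hb.2], by rw [arcThrough, hC]⟩

lemma subset_arcThrough (hrπ : r < π) (hc : (c : S1) ∈ Θ) {t : ℝ}
    (ht : t ∈ admissibleLifts r Θ c) {B : Set S1} (hB : IsClosedArc B)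
    (hBΘ : ∀ x ∈ B, ¬ ExcludedBy r Θ x) (htB : (t : S1) ∈ B) :
    B ⊆ arcThrough r Θ c t := by
  obtain ⟨a, b, hW, rfl⟩ :=
    hB.exists_Icc_subset hrπ fun z hz => not_lt.1 fun h => hBΘ z hz ⟨_, hc, h⟩
  have hadm : Icc a b ⊆ admissibleLifts r Θ c := fun u hu => ⟨hW hu, hBΘ _ ⟨u, hu, rfl⟩⟩
  have htab : t ∈ Icc a b := ((S1.injOn_coe_Icc hrπ).mem_image_iff hW ht.1).1 htB
  exact image_mono (isPreconnected_Icc.subset_connectedComponentIn htab hadm)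

lemma isArc_arcThrough (hrπ : r < π) (hc : (c : S1) ∈ Θ) {t : ℝ}
    (ht : t ∈ admissibleLifts r Θ c) (htΘ : (t : S1) ∈ Θ) :
    IsArc r Θ (arcThrough r Θ c t) :=
  ⟨isClosedArc_arcThrough hrπ ht, ⟨t, mem_arcThrough ht, htΘ⟩,
    fun _ => not_excludedBy_of_mem_arcThrough, fun _ hB _ hBΘ hsub =>
      hsub.antisymm (subset_arcThrough hrπ hc ht hB hBΘ (hsub (mem_arcThrough ht)))⟩

lemma IsArc.eq_arcThrough (hrπ : r < π) (hc : (c : S1) ∈ Θ) {A : Set S1} (hA : IsArc r Θ A)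
    {t : ℝ} (ht : t ∈ admissibleLifts r Θ c) (htA : (t : S1) ∈ A) :
    A = arcThrough r Θ c t := by
  obtain ⟨hAarc, ⟨θ, hθA, hθΘ⟩, hAΘ, hAmax⟩ := hA
  have hsub := subset_arcThrough hrπ hc ht hAarc hAΘ htA
  exact hAmax _ (isClosedArc_arcThrough hrπ ht) ⟨θ, hsub hθA, hθΘ⟩
    (fun _ => not_excludedBy_of_mem_arcThrough) hsub

lemma arcThrough_eq_arcThrough_iff (hrπ : r < π) {s s' : ℝ} (hs : s ∈ admissibleLifts r Θ c)
    (hs' : s' ∈ admissibleLifts r Θ c) (hss' : s ≤ s') :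
    arcThrough r Θ c s = arcThrough r Θ c s' ↔ Icc s s' ⊆ admissibleLifts r Θ c := by
  constructor
  · intro h
    have hs'A : (s' : S1) ∈ arcThrough r Θ c s := h ▸ mem_arcThrough hs'
    have hs'C : s' ∈ connectedComponentIn (admissibleLifts r Θ c) s :=
      ((S1.injOn_coe_Icc hrπ).mem_image_iff (connectedComponentIn_admissibleLifts_subset_Icc s)
        hs'.1).1 hs'A
    exact (isPreconnected_connectedComponentIn.Icc_subset (mem_connectedComponentIn hs)
      hs'C).trans (connectedComponentIn_subset _ _)
  · intro h
    rw [arcThrough, arcThrough, connectedComponentIn_eq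
      (isPreconnected_Icc.subset_connectedComponentIn (left_mem_Icc.2 hss') h
        (right_mem_Icc.2 hss'))]

lemma exists_excludedBy_of_arcThrough_ne (hrπ : r < π) {s s' : ℝ}
    (hs : s ∈ admissibleLifts r Θ c) (hs' : s' ∈ admissibleLifts r Θ c) (hss' : s ≤ s')
    (hne : arcThrough r Θ c s ≠ arcThrough r Θ c s') :
    ∃ u ∈ Ioo s s', ExcludedBy r Θ u := by
  by_contra! h
  refine hne ((arcThrough_eq_arcThrough_iff hrπ hs hs' hss').2 fun u hu =>
    ⟨⟨hs.1.1.trans hu.1, hu.2.trans hs'.1.2⟩, ?_⟩)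
  rcases hu.1.eq_or_lt with rfl | hsu
  · exact hs.2
  rcases hu.2.eq_or_lt with rfl | hus
  · exact hs'.2
  exact h u ⟨hsu, hus⟩

lemma arcThrough_ne_of_excludedBy (hrπ : r < π) {s s' u : ℝ}
    (hs : s ∈ admissibleLifts r Θ c) (hs' : s' ∈ admissibleLifts r Θ c)
    (hsu : s < u) (hus : u < s') (hu : ExcludedBy r Θ u) :
    arcThrough r Θ c s ≠ arcThrough r Θ c s' := fun h =>
  ((arcThrough_eq_arcThrough_iff hrπ hs hs' (hsu.trans hus).le).1 h ⟨hsu.le, hus.le⟩).2 hu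

lemma pointLifts_subset_admissibleLifts (hd : ∀ x ∈ Θ, ∀ y ∈ Θ, dist x y ≤ r) :
    pointLifts r Θ c ⊆ admissibleLifts r Θ c :=
  fun _ ht => ⟨ht.1, fun ⟨θ, hθ, h⟩ => (hd θ hθ _ ht.2).not_gt h⟩

lemma mem_pointLifts_of_abs_sub_le (hd : ∀ x ∈ Θ, ∀ y ∈ Θ, dist x y ≤ r) (hc : (c : S1) ∈ Θ)
    {t : ℝ} (ht : (t : S1) ∈ Θ) (htc : |t - c| ≤ π) :
    t ∈ pointLifts r Θ c := by
  have := hd _ hc _ ht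
  rw [S1.dist_coe_eq (abs_sub_comm t c ▸ htc), abs_sub_comm] at this
  exact ⟨⟨by linarith [abs_le.1 this], by linarith [abs_le.1 this]⟩, ht⟩

lemma setOf_isArc_eq_image (hd : ∀ x ∈ Θ, ∀ y ∈ Θ, dist x y ≤ r) (hrπ : r < π)
    (hc : (c : S1) ∈ Θ) :
    {A | IsArc r Θ A} = arcThrough r Θ c '' pointLifts r Θ c := by
  refine Subset.antisymm (fun A hA => ?_) ?_
  · obtain ⟨θ, hθA, hθΘ⟩ := hA.2.1
    obtain ⟨t, rfl, htc, -⟩ := S1.exists_lift c θ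
    have ht := mem_pointLifts_of_abs_sub_le hd hc hθΘ htc
    exact ⟨t, ht, (hA.eq_arcThrough hrπ hc (pointLifts_subset_admissibleLifts hd ht) hθA).symm⟩
  · rintro _ ⟨t, ht, rfl⟩
    exact isArc_arcThrough hrπ hc (pointLifts_subset_admissibleLifts hd ht) ht.2

lemma Set.Finite.pointLifts (hrπ : r < π) (hΘ : Θ.Finite) : (pointLifts r Θ c).Finite :=
  Finite.of_finite_image (hΘ.subset (image_subset_iff.2 fun _ ht => ht.2))
    ((S1.injOn_coe_Icc hrπ).mono fun _ ht => ht.1)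

end Arcs

section Semicontinuity

variable {r : ℝ} {Θ Θ' : Set S1} {c c' : ℝ}

lemma eventually_exists_gap_of_arcThrough_ne (hrπ : r < π) {t t' : ℝ}
    (ht : t ∈ admissibleLifts r Θ c) (ht' : t' ∈ admissibleLifts r Θ c) (htt' : t ≤ t')
    (hne : arcThrough r Θ c t ≠ arcThrough r Θ c t') :
    ∀ᶠ δ in 𝓝 (0 : ℝ), ∃ u, t + δ < u ∧ u < t' - δ ∧ ∃ θ ∈ Θ, r + δ < dist θ u := by
  obtain ⟨u, hu, θ, hθ, hθu⟩ := exists_excludedBy_of_arcThrough_ne hrπ ht ht' htt' hne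
  filter_upwards [eventually_lt_nhds (sub_pos.2 hu.1), eventually_lt_nhds (sub_pos.2 hu.2),
    eventually_lt_nhds (sub_pos.2 hθu)] with δ h₁ h₂ h₃
  exact ⟨u, by linarith, by linarith, θ, hθ, by linarith⟩

lemma exists_mem_pointLifts_abs_sub_lt (hd' : ∀ x ∈ Θ', ∀ y ∈ Θ', dist x y ≤ r)
    (hc' : (c' : S1) ∈ Θ') {δ : ℝ} (hδ : δ < (π - r) / 2) (hcc' : |c' - c| < δ) {t : ℝ}
    (ht : t ∈ Icc (c - r) (c + r)) {y : S1} (hy : y ∈ Θ') (hty : dist (t : S1) y < δ) :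
    ∃ s ∈ pointLifts r Θ' c', |s - t| < δ := by
  obtain ⟨s, rfl, -, hts⟩ := S1.exists_lift t y
  rw [hts] at hty
  refine ⟨s, mem_pointLifts_of_abs_sub_le hd' hc' hy ?_, hty⟩
  rw [abs_lt] at hty hcc'
  exact abs_le.2 ⟨by linarith [ht.1], by linarith [ht.2]⟩

lemma arcThrough_ne_of_abs_sub_lt (hrπ : r < π) {s s' : ℝ} (hs : s ∈ admissibleLifts r Θ' c')
    (hs' : s' ∈ admissibleLifts r Θ' c') {t t' u δ : ℝ} {θ y : S1} (hst : |s - t| < δ)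
    (hs't' : |s' - t'| < δ) (htu : t + δ < u) (hut' : u < t' - δ) (hθu : r + δ < dist θ (u : S1))
    (hy : y ∈ Θ') (hθy : dist θ y < δ) :
    arcThrough r Θ' c' s ≠ arcThrough r Θ' c' s' := by
  rw [abs_lt] at hst hs't'
  refine arcThrough_ne_of_excludedBy hrπ hs hs' (u := u) (by linarith) (by linarith) ⟨y, hy, ?_⟩
  linarith [dist_triangle θ y u]

theorem exists_pos_forall_arcsCount_le (hrπ : r < π) (hΘ : Θ.Finite) (hΘne : Θ.Nonempty)
    (hd : ∀ x ∈ Θ, ∀ y ∈ Θ, dist x y ≤ r) :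
    ∃ δ > 0, ∀ Θ' : Set S1, Θ'.Finite → (∀ x ∈ Θ', ∀ y ∈ Θ', dist x y ≤ r) →
      (∀ θ ∈ Θ, ∃ y ∈ Θ', dist θ y < δ) → arcsCount r Θ ≤ arcsCount r Θ' := by
  obtain ⟨_, ⟨c, rfl⟩, hc⟩ : ∃ q, (∃ c : ℝ, (c : S1) = q) ∧ q ∈ Θ :=
    hΘne.imp fun q hq => ⟨QuotientAddGroup.mk_surjective q, hq⟩
  set L := pointLifts r Θ c
  have hL : L.Finite := hΘ.pointLifts hrπ
  have hLadm : L ⊆ admissibleLifts r Θ c := pointLifts_subset_admissibleLifts hd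
  have hgaps : ∀ p ∈ L ×ˢ L, ∀ᶠ δ in 𝓝 (0 : ℝ), p.1 < p.2 →
      arcThrough r Θ c p.1 ≠ arcThrough r Θ c p.2 →
      ∃ u, p.1 + δ < u ∧ u < p.2 - δ ∧ ∃ θ ∈ Θ, r + δ < dist θ u := by
    rintro ⟨t, t'⟩ ⟨ht, ht'⟩
    by_cases h : t < t' ∧ arcThrough r Θ c t ≠ arcThrough r Θ c t'
    · exact (eventually_exists_gap_of_arcThrough_ne hrπ (hLadm ht) (hLadm ht') h.1.le
        h.2).mono fun _ hgap _ _ => hgap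
    · exact .of_forall fun _ h₁ h₂ => absurd ⟨h₁, h₂⟩ h
  obtain ⟨δ, ⟨hδgap, hδπ⟩, hδ⟩ := (((hL.prod hL).eventually_all.2 hgaps).and
    (eventually_lt_nhds (by linarith : (0 : ℝ) < (π - r) / 2))).filter_mono
      nhdsWithin_le_nhds |>.and (self_mem_nhdsWithin (s := Ioi 0)) |>.exists
  refine ⟨δ, hδ, fun Θ' hΘ' hd' hnear => ?_⟩
  obtain ⟨y₀, hc', hcc'⟩ := hnear _ hc
  obtain ⟨c', rfl, -, hcc'_eq⟩ := S1.exists_lift c y₀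
  choose! s hsL hst using fun t (ht : t ∈ L) =>
    let ⟨y, hy, hty⟩ := hnear _ ht.2
    exists_mem_pointLifts_abs_sub_lt hd' hc' hδπ (hcc'_eq ▸ hcc') ht.1 hy hty
  have hsadm : ∀ t ∈ L, s t ∈ admissibleLifts r Θ' c' :=
    fun t ht => pointLifts_subset_admissibleLifts hd' (hsL t ht)
  have separated : ∀ t ∈ L, ∀ t' ∈ L, t < t' →
      arcThrough r Θ c t ≠ arcThrough r Θ c t' →
      arcThrough r Θ' c' (s t) ≠ arcThrough r Θ' c' (s t') := by
    intro t ht t' ht' htt' hne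
    obtain ⟨u, htu, hut', θ, hθ, hθu⟩ := hδgap ⟨t, t'⟩ ⟨ht, ht'⟩ htt' hne
    obtain ⟨y, hy, hθy⟩ := hnear θ hθ
    exact arcThrough_ne_of_abs_sub_lt hrπ (hsadm t ht) (hsadm t' ht') (hst t ht) (hst t' ht')
      htu hut' hθu hy hθy
  calc arcsCount r Θ = (arcThrough r Θ c '' L).ncard := by
        rw [arcsCount, setOf_isArc_eq_image hd hrπ hc]
    _ ≤ ((arcThrough r Θ' c' ∘ s) '' L).ncard := by
        refine ncard_image_le_ncard_image_of_eq_imp_eq (hL.image _) fun t ht t' ht' heq => ?_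
        by_contra hne
        rcases lt_trichotomy t t' with h | rfl | h
        · exact separated t ht t' ht' h hne heq
        · exact hne rfl
        · exact separated t' ht' t ht h (Ne.symm hne) heq.symm
    _ ≤ arcsCount r Θ' := by
        rw [arcsCount, setOf_isArc_eq_image hd' hrπ hc', image_comp]
        exact ncard_le_ncard (image_mono (image_subset_iff.2 hsL)) ((hΘ'.pointLifts hrπ).image _)

end Semicontinuity

lemma dist_le_of_mem_VRm {r : ℝ} {μ : Pfin S1} (hμ : μ ∈ VRm r) :
    ∀ x ∈ suppSet μ.1, ∀ y ∈ suppSet μ.1, dist x y ≤ r := fun _ hx _ hy =>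
  (dist_le_diam_of_mem μ.suppSet_finite.isBounded hx hy).trans hμ

theorem arcs_lower_semicontinuous_general (r : ℝ) (hrπ : r < Real.pi) (k : ℕ)
    (μ : Pfin S1) (hμ : μ ∈ V r k) :
    ∀ᶠ ν in nhdsWithin μ (VRm r), 2 * k + 1 ≤ arcsCountM r ν := by
  obtain ⟨hμr, hcount⟩ := hμ
  obtain ⟨δ, hδ, hle⟩ := exists_pos_forall_arcsCount_le hrπ μ.suppSet_finite
    μ.suppSet_nonempty (dist_le_of_mem_VRm hμr)
  have hnear : ∀ᶠ ν in 𝓝 μ, ∀ θ ∈ suppSet μ.1, ∃ y ∈ suppSet ν.1, dist θ y < δ :=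
    μ.suppSet_finite.eventually_all.2 fun θ hθ =>
      Pfin.eventually_exists_mem_suppSet hθ isOpen_ball (mem_ball_self hδ) |>.mono
        fun _ ⟨y, hy, hyθ⟩ => ⟨y, hy, mem_ball'.1 hyθ⟩
  filter_upwards [nhdsWithin_le_nhds hnear, self_mem_nhdsWithin] with ν hν hνr
  rw [← hcount]
  exact hle _ (Pfin.suppSet_finite ν) (dist_le_of_mem_VRm hνr) hν

/-- Let `r ∈ [0,π)`, `k ≥ 0`, and `μ ∈ V_{2k+1}(r)`. Every measure `ν`
in a sufficiently small neighborhood of `μ` in `VRm(S¹;r)` has at least `2k+1` arcs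
(equivalently, such a neighborhood is disjoint from `W_{2k−1}(r)`). -/
theorem arcs_lower_semicontinuous (r : ℝ) (hr0 : 0 ≤ r) (hrπ : r < Real.pi) (k : ℕ)
    (μ : Pfin S1) (hμ : μ ∈ V r k) :
    ∀ᶠ ν in nhdsWithin μ (VRm r), 2 * k + 1 ≤ arcsCountM r ν :=
  arcs_lower_semicontinuous_general r hrπ k μ hμ
end
end

section
/- Let r ∈ [0,π), k ≥ 0, and μ ∈ V_{2k+1}(r). For every ε > 0 there is a neighborhood U of μ in VRm(S¹;r) such that for every ν ∈ U the following holds: if A_0,…,A_{2l} are all the (ν,r)-arcs and, for each i, A'_i is the closed arc obtained from A_i by extending it by (π−r)/2 at each end, then ν(A'_i) = ν(A_i) for each i, the arcs A'_0,…,A'_{2l} are pairwise disjoint, supp(μ) ⊆ ⋃_i A'_i, and |μ(A'_i) − ν(A'_i)| < ε for every i. -/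
open MeasureTheory Metric Filter
open scoped unitInterval

noncomputable section

/-- `A'` is obtained from the closed arc `A` by extending it by `c` at each end. -/
def IsExtensionBy (c : ℝ) (A A' : Set S1) : Prop :=
  ∃ a b : ℝ, a ≤ b ∧ b < a + 2 * Real.pi ∧
    A = (fun t : ℝ => (t : S1)) '' Set.Icc a b ∧
    A' = (fun t : ℝ => (t : S1)) '' Set.Icc (a - c) (b + c)

/-! The points not excluded by `Θ` form an intersection of closed balls of radius `r < π`, and
such a ball contains every arc of length at most `π - r` joining two of its points. Hence a
non-excluded point within `π - r` of a `(Θ,r)`-arc lies on that arc: distinct arcs are more than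
`π - r` apart, so their `(π - r)/2`-extensions are disjoint, and each point of `Θ` lies on an
arc, the image of the connected component of its lift among the lifts of non-excluded points.

For the measures, take `δ ≤ (π - r)/2` below every distance between atoms of `μ`. Unions of
`δ`-balls about atoms of `μ` have `μ`-null frontier, so by the portmanteau theorem their
`ν`-masses are close to their `μ`-masses. When `ν` is close to `μ`, each atom `x` of `μ` has atoms
of `ν` within `δ`, all on the arc whose extension contains `x`; comparing `ν(A'ᵢ)` and `ν(A'ᵢᶜ)`
with the balls about the atoms of `μ` inside and outside `A'ᵢ` gives both bounds. -/

open Set Function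
open scoped Real NNReal Topology

namespace S1

lemma dist_coe_le (s t : ℝ) : dist (s : S1) (t : S1) ≤ |s - t| := by
  rw [dist_eq_norm, ← AddCircle.coe_sub]
  exact QuotientAddGroup.norm_mk_le_norm

lemma dist_coe_of_abs_le {s t : ℝ} (h : |s - t| ≤ π) : dist (s : S1) (t : S1) = |s - t| := by
  rw [dist_eq_norm, ← AddCircle.coe_sub, AddCircle.norm_coe_eq_abs_iff _ Real.two_pi_pos.ne',
    abs_of_pos Real.two_pi_pos]
  linarith

lemma exists_coe_eq_dist_eq (x : S1) (t : ℝ) :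
    ∃ s : ℝ, (s : S1) = x ∧ |s - t| ≤ π ∧ dist x (t : S1) = |s - t| := by
  obtain ⟨s, hs, rfl⟩ : ∃ s ∈ Ico (t - π) (t - π + 2 * π), (s : S1) = x := by
    rw [← Set.mem_image, AddCircle.coe_image_Ico_eq]; trivial
  have hst : |s - t| ≤ π := abs_le.2 ⟨by linarith [hs.1], by linarith [hs.2]⟩
  exact ⟨s, rfl, hst, dist_coe_of_abs_le hst⟩

lemma coe_add_sub_of_coe_eq {e t : ℝ} (h : (e : S1) = (t : S1)) (s : ℝ) :
    ((s + (t - e) : ℝ) : S1) = (s : S1) := by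
  rw [AddCircle.coe_add, AddCircle.coe_sub, h, sub_self, add_zero]

lemma dist_coe_le_of_mem_Icc {r s u v : ℝ} {θ : S1} (hs : dist θ (s : S1) ≤ r)
    (hv : dist θ (v : S1) ≤ r) (hsv : v - s ≤ π - r) (hu : u ∈ Icc s v) :
    dist θ (u : S1) ≤ r := by
  have hr : 0 ≤ r := dist_nonneg.trans hs
  obtain ⟨w, rfl, hwu, hd⟩ := exists_coe_eq_dist_eq θ u
  obtain ⟨hu₁, hu₂⟩ := hu
  have hwu' := abs_le.1 hwu
  rw [hd]
  by_contra! hgt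
  rcases lt_or_ge w u with hlt | hge
  · rw [abs_of_neg (by linarith)] at hgt
    rw [dist_coe_of_abs_le (abs_le.2 ⟨by linarith, by linarith⟩)] at hs
    have := abs_le.1 hs
    rw [dist_coe_of_abs_le (abs_le.2 ⟨by linarith, by linarith⟩)] at hv
    linarith [abs_le.1 hv]
  · rw [abs_of_nonneg (by linarith)] at hgt
    rw [dist_coe_of_abs_le (abs_le.2 ⟨by linarith, by linarith⟩)] at hv
    have := abs_le.1 hv
    rw [dist_coe_of_abs_le (abs_le.2 ⟨by linarith, by linarith⟩)] at hs
    linarith [abs_le.1 hs]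

lemma subset_Icc_of_forall_dist_le {T : Set ℝ} {t r : ℝ} (hT : IsPreconnected T) (ht : t ∈ T)
    (hd : ∀ s ∈ T, dist (t : S1) (s : S1) ≤ r) (hrπ : r < π) : T ⊆ Icc (t - r) (t + r) := by
  have hπ := Real.pi_pos
  have hr : 0 ≤ r := by simpa using hd t ht
  intro s hs
  by_contra! h
  rw [mem_Icc, not_and_or, not_le, not_le] at h
  rcases h with h | h
  · have hs' := hd _
      (hT.Icc_subset hs ht ⟨le_max_left s (t - π), max_le (by linarith) (by linarith)⟩)
    have hlt : max s (t - π) < t - r := max_lt h (by linarith)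
    rw [dist_coe_of_abs_le (abs_le.2 ⟨by linarith, by linarith [le_max_right s (t - π)]⟩),
      abs_le] at hs'
    linarith [hs'.1]
  · have hs' := hd _
      (hT.Icc_subset ht hs ⟨le_min (by linarith) (by linarith), min_le_left s (t + π)⟩)
    have hlt : t + r < min s (t + π) := lt_min h (by linarith)
    rw [dist_coe_of_abs_le (abs_le.2 ⟨by linarith [min_le_right s (t + π)], by linarith⟩),
      abs_le] at hs'
    linarith [hs'.1]

end S1

def arcImage (a b : ℝ) : Set S1 := (fun t : ℝ => (t : S1)) '' Icc a b

lemma coe_mem_arcImage {a b s : ℝ} (h : s ∈ Icc a b) : (s : S1) ∈ arcImage a b :=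
  mem_image_of_mem _ h

lemma coe_mem_arcImage_iff {a b x : ℝ} (hb : b < a + 2 * π)
    (hx : x ∈ Ioo (b - 2 * π) (a + 2 * π)) : (x : S1) ∈ arcImage a b ↔ x ∈ Icc a b := by
  refine ⟨?_, coe_mem_arcImage⟩
  rintro ⟨s, hs, hsx⟩
  rcases le_or_gt a x with hax | hxa
  · rwa [← (AddCircle.coe_eq_coe_iff_of_mem_Ico (a := a) ⟨hs.1, by linarith [hs.2]⟩
      ⟨hax, hx.2⟩).1 hsx]
  · have := (AddCircle.coe_eq_coe_iff_of_mem_Ico (a := x) ⟨by linarith [hs.1],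
      by linarith [hs.2, hx.1]⟩ ⟨le_rfl, by linarith [Real.pi_pos]⟩).1 hsx
    linarith [hs.1]

lemma IsClosedArc.isCompact {A : Set S1} (hA : IsClosedArc A) : IsCompact A := by
  obtain ⟨a, b, -, -, rfl⟩ := hA
  exact isCompact_Icc.image (AddCircle.continuous_mk' _)

lemma IsClosedArc.isPreconnected {A : Set S1} (hA : IsClosedArc A) : IsPreconnected A := by
  obtain ⟨a, b, -, -, rfl⟩ := hA
  exact isPreconnected_Icc.image _ (AddCircle.continuous_mk' _).continuousOn

lemma not_excludedBy_iff {r : ℝ} {Θ : Set S1} {x : S1} :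
    ¬ ExcludedBy r Θ x ↔ ∀ θ ∈ Θ, dist θ x ≤ r := by
  simp [ExcludedBy]

namespace IsArc

variable {r : ℝ} {Θ A B : Set S1}

lemma eq_of_subset_arcImage {a b a' b' : ℝ} (hA : IsArc r Θ (arcImage a b)) (hab : a ≤ b)
    (ha' : a' ≤ a) (hb' : b ≤ b') (hb'a' : b' < a' + 2 * π)
    (hG : ∀ x ∈ arcImage a' b', ¬ ExcludedBy r Θ x) : a' = a ∧ b' = b := by
  have hsub : arcImage a b ⊆ arcImage a' b' := image_mono (Icc_subset_Icc ha' hb')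
  have heq := hA.2.2.2 _ ⟨a', b', by linarith, hb'a', rfl⟩
    (hA.2.1.mono (inter_subset_inter_left _ hsub)) hG hsub
  have hb : b < a + 2 * π := by linarith
  have hπ := Real.pi_pos
  have ha'mem := (coe_mem_arcImage_iff hb ⟨by linarith, by linarith⟩).1
    (heq ▸ coe_mem_arcImage ⟨le_rfl, by linarith⟩ : (a' : S1) ∈ arcImage a b)
  have hb'mem := (coe_mem_arcImage_iff hb ⟨by linarith, by linarith⟩).1
    (heq ▸ coe_mem_arcImage ⟨by linarith, le_rfl⟩ : (b' : S1) ∈ arcImage a b)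
  exact ⟨le_antisymm ha' ha'mem.1, le_antisymm hb'mem.2 hb'⟩

lemma coe_mem_of_not_excludedBy {a b q : ℝ} (hA : IsArc r Θ (arcImage a b)) (hab : a ≤ b)
    (hq : q ∈ Icc (a - (π - r)) (b + (π - r)))
    (hx : ¬ ExcludedBy r Θ (q : S1)) : (q : S1) ∈ arcImage a b := by
  have hG := hA.2.2.1
  obtain ⟨θ₀, -, hθ₀⟩ := hA.2.1
  have hr : 0 ≤ r := dist_nonneg.trans (not_excludedBy_iff.1 hx θ₀ hθ₀)
  have hπ := Real.pi_pos
  have hdist (s : ℝ) (hs : s ∈ Icc a b) : ∀ θ ∈ Θ, dist θ (s : S1) ≤ r :=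
    not_excludedBy_iff.1 (hG _ (coe_mem_arcImage hs))
  rcases lt_or_ge b q with hbq | hqb
  · rcases lt_or_ge q (a + 2 * π) with hq2 | hq2
    · -- otherwise `[a, q]` would be a longer arc of non-excluded points
      refine absurd (eq_of_subset_arcImage hA hab le_rfl hbq.le hq2 ?_).2 hbq.ne'
      rintro _ ⟨s, hs, rfl⟩
      rcases le_or_gt s b with hsb | hbs
      · exact hG _ (coe_mem_arcImage ⟨hs.1, hsb⟩)
      · exact not_excludedBy_iff.2 fun θ hθ => S1.dist_coe_le_of_mem_Icc
          (hdist b ⟨hab, le_rfl⟩ θ hθ) (not_excludedBy_iff.1 hx θ hθ) (by linarith [hq.2])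
          ⟨hbs.le, hs.2⟩
    · rw [← sub_add_cancel q (2 * π), AddCircle.coe_add, AddCircle.coe_period, add_zero]
      exact coe_mem_arcImage ⟨by linarith, by linarith [hq.2]⟩
  rcases le_or_gt a q with haq | hqa
  · exact coe_mem_arcImage ⟨haq, hqb⟩
  rcases lt_or_ge (b - 2 * π) q with hq2 | hq2
  · refine absurd (eq_of_subset_arcImage hA hab hqa.le le_rfl (by linarith) ?_).1 hqa.ne
    rintro _ ⟨s, hs, rfl⟩
    rcases le_or_gt a s with has | hsa
    · exact hG _ (coe_mem_arcImage ⟨has, hs.2⟩)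
    · exact not_excludedBy_iff.2 fun θ hθ => S1.dist_coe_le_of_mem_Icc
        (not_excludedBy_iff.1 hx θ hθ) (hdist a ⟨le_rfl, hab⟩ θ hθ) (by linarith [hq.1])
        ⟨hs.1, hsa.le⟩
  · rw [← add_sub_cancel_right q (2 * π), AddCircle.coe_sub, AddCircle.coe_period, sub_zero]
    exact coe_mem_arcImage ⟨by linarith [hq.1], by linarith⟩

lemma mem_of_dist_le {y z : S1} (hA : IsArc r Θ A) (hy : y ∈ A) (hz : ¬ ExcludedBy r Θ z)
    (hzy : dist z y ≤ π - r) : z ∈ A := by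
  obtain ⟨a, b, hab, -, rfl⟩ := hA.1
  obtain ⟨m, hm, rfl⟩ := hy
  obtain ⟨q, rfl, -, hd⟩ := S1.exists_coe_eq_dist_eq z m
  have := abs_le.1 (hd ▸ hzy)
  exact coe_mem_of_not_excludedBy hA hab ⟨by linarith [hm.1], by linarith [hm.2]⟩ hz

lemma eq_of_inter_nonempty (hrπ : r < π) (hA : IsArc r Θ A) (hB : IsArc r Θ B)
    (hAB : (A ∩ B).Nonempty) : A = B := by
  obtain ⟨x, hxA, hxB⟩ := hAB
  have hρ : 0 < π - r := by linarith
  have hclosure : closure (thickening (π - r) A) ∩ B ⊆ A := by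
    rintro z ⟨hz, hzB⟩
    have hz' := closure_thickening_subset_cthickening (π - r) A hz
    rw [cthickening_eq_biUnion_closedBall _ hρ.le, hA.1.isCompact.isClosed.closure_eq] at hz'
    obtain ⟨y, hy, hzy⟩ := mem_iUnion₂.1 hz'
    exact hA.mem_of_dist_le hy (hB.2.2.1 z hzB) (mem_closedBall.1 hzy)
  have hBA : B ⊆ thickening (π - r) A :=
    hB.1.isPreconnected.subset_of_closure_inter_subset isOpen_thickening
      ⟨x, hxB, self_subset_thickening hρ A hxA⟩ (hclosure.trans (self_subset_thickening hρ A))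
  exact (hB.2.2.2 A hA.1 hA.2.1 hA.2.2.1 fun z hz => hclosure ⟨subset_closure (hBA hz), hz⟩).symm

end IsArc

lemma exists_isArc_mem {r : ℝ} {Θ : Set S1} {θ : S1} (hrπ : r < π) (hθ : θ ∈ Θ)
    (hθ' : ¬ ExcludedBy r Θ θ) : ∃ A, IsArc r Θ A ∧ θ ∈ A := by
  obtain ⟨t, rfl⟩ := QuotientAddGroup.mk_surjective θ
  set P := {s : ℝ | ¬ ExcludedBy r Θ (s : S1)}
  have hP : IsClosed P := by
    simp_rw [P, not_excludedBy_iff, ofPred_forall]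
    exact isClosed_biInter fun θ _ =>
      isClosed_le (continuous_const.dist (AddCircle.continuous_mk' _)) continuous_const
  set C := connectedComponentIn P t
  have htC : t ∈ C := mem_connectedComponentIn hθ'
  have hCP : C ⊆ P := connectedComponentIn_subset P t
  have hC : IsPreconnected C := isPreconnected_connectedComponentIn
  have hCbdd : C ⊆ Icc (t - r) (t + r) := S1.subset_Icc_of_forall_dist_le hC htC
    (fun s hs => not_excludedBy_iff.1 (hCP hs) _ hθ) hrπ
  have hCeq : C = Icc (sInf C) (sSup C) := eq_Icc_csInf_csSup_of_connected_bdd_closed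
    ⟨⟨t, htC⟩, hC⟩ (bddBelow_Icc.mono hCbdd) (bddAbove_Icc.mono hCbdd)
    (closure_subset_iff_isClosed.1 <| hC.closure.subset_connectedComponentIn
      (subset_closure htC) (closure_minimal hCP hP))
  set a := sInf C
  set b := sSup C
  have htab : t ∈ Icc a b := hCeq ▸ htC
  have hab : Icc a b ⊆ Icc (t - r) (t + r) := hCeq ▸ hCbdd
  refine ⟨arcImage a b, ⟨⟨a, b, htab.1.trans htab.2, ?_, rfl⟩, ⟨t, coe_mem_arcImage htab, hθ⟩,
    ?_, ?_⟩, coe_mem_arcImage htab⟩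
  · linarith [(hab ⟨le_rfl, htab.1.trans htab.2⟩).1, (hab ⟨htab.1.trans htab.2, le_rfl⟩).2]
  · rintro _ ⟨s, hs, rfl⟩
    exact hCP (hCeq ▸ hs)
  · rintro _ ⟨c, d, -, -, rfl⟩ - hBG hAB
    obtain ⟨e, he, hte⟩ := hAB (coe_mem_arcImage htab)
    beta_reduce at hte
    have hshift : Icc (c + (t - e)) (d + (t - e)) ⊆ C :=
      isPreconnected_Icc.subset_connectedComponentIn ⟨by linarith [he.1], by linarith [he.2]⟩
        fun s hs => by
          show ¬ ExcludedBy r Θ (s : S1)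
          rw [← sub_add_cancel s (t - e), S1.coe_add_sub_of_coe_eq hte]
          exact hBG _ (coe_mem_arcImage ⟨by linarith [hs.1], by linarith [hs.2]⟩)
    refine hAB.antisymm ?_
    rintro _ ⟨s, hs, rfl⟩
    show (s : S1) ∈ _
    rw [← S1.coe_add_sub_of_coe_eq hte s]
    exact coe_mem_arcImage (hCeq ▸ hshift ⟨by linarith [hs.1], by linarith [hs.2]⟩)

namespace IsExtensionBy

variable {c : ℝ} {A A' : Set S1}

lemma subset (h : IsExtensionBy c A A') (hc : 0 ≤ c) : A ⊆ A' := by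
  obtain ⟨a, b, -, -, rfl, rfl⟩ := h
  exact image_mono (Icc_subset_Icc (by linarith) (by linarith))

lemma isClosed (h : IsExtensionBy c A A') : IsClosed A' := by
  obtain ⟨a, b, -, -, -, rfl⟩ := h
  exact (isCompact_Icc.image (AddCircle.continuous_mk' _)).isClosed

lemma thickening_subset {δ : ℝ} (h : IsExtensionBy c A A') (hδ : δ ≤ c) :
    thickening δ A ⊆ A' := by
  obtain ⟨a, b, -, -, rfl, rfl⟩ := h
  intro z hz
  obtain ⟨_, ⟨s, hs, rfl⟩, hzs⟩ := mem_thickening_iff.1 hz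
  obtain ⟨q, rfl, -, hd⟩ := S1.exists_coe_eq_dist_eq z s
  have := abs_lt.1 (hd ▸ hzs)
  exact coe_mem_arcImage ⟨by linarith [hs.1], by linarith [hs.2]⟩

lemma exists_dist_le {z : S1} (h : IsExtensionBy c A A') (hc : 0 ≤ c) (hz : z ∈ A') :
    ∃ y ∈ A, dist z y ≤ c := by
  obtain ⟨a, b, hab, -, rfl, rfl⟩ := h
  obtain ⟨m, hm, rfl⟩ := hz
  refine ⟨_, coe_mem_arcImage ⟨le_max_left a (min b m), max_le hab (min_le_left b m)⟩,
    (S1.dist_coe_le _ _).trans ?_⟩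
  have := hm.1; have := hm.2
  rw [abs_le]
  constructor <;> simp only [max_def, min_def] <;> split_ifs <;> linarith

lemma disjoint {r : ℝ} {Θ B B' : Set S1} (hrπ : r < π)
    (hA' : IsExtensionBy ((π - r) / 2) A A') (hB' : IsExtensionBy ((π - r) / 2) B B')
    (hA : IsArc r Θ A) (hB : IsArc r Θ B) (hAB : A ≠ B) : Disjoint A' B' := by
  rw [Set.disjoint_left]
  intro z hzA hzB
  obtain ⟨y, hy, hzy⟩ := hA'.exists_dist_le (by linarith) hzA
  obtain ⟨y', hy', hzy'⟩ := hB'.exists_dist_le (by linarith) hzB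
  have hy'A : y' ∈ A := hA.mem_of_dist_le hy (hB.2.2.1 y' hy')
    (by linarith [dist_triangle_left y' y z])
  exact hAB (hA.eq_of_inter_nonempty hrπ hB ⟨y', hy'A, hy'⟩)

end IsExtensionBy

section Separated

variable {X : Type*}

lemma Set.Finite.exists_pos_le_pairwise_lt_dist [MetricSpace X] {S : Set X} (hS : S.Finite)
    {c : ℝ} (hc : 0 < c) : ∃ δ, 0 < δ ∧ δ ≤ c ∧ S.Pairwise (δ < dist · ·) := by
  have hsep : ∀ᶠ δ in 𝓝[>] (0 : ℝ), ∀ x ∈ S, ∀ y ∈ S, x ≠ y → δ < dist x y :=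
    (eventually_all_finite hS).2 fun x _ => (eventually_all_finite hS).2 fun y _ => by
      by_cases hxy : x = y
      · exact Eventually.of_forall fun _ h => absurd hxy h
      · exact (eventually_lt_nhds (dist_pos.2 hxy)).filter_mono nhdsWithin_le_nhds
          |>.mono fun _ h _ => h
  obtain ⟨δ, ⟨hδ, hδc⟩, hδS⟩ :=
    ((show ∀ᶠ δ in 𝓝[>] (0 : ℝ), δ ∈ Ioo 0 c from Ioo_mem_nhdsGT hc).and hsep).exists
  exact ⟨δ, hδ, hδc.le, hδS⟩

variable [PseudoMetricSpace X] {S T : Set X} {δ : ℝ}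

lemma biUnion_ball_inter_eq (hδ : 0 < δ) (hS : S.Pairwise (δ < dist · ·)) (hT : T ⊆ S) :
    (⋃ x ∈ T, ball x δ) ∩ S = T := by
  refine Subset.antisymm ?_ fun x hx => ⟨mem_biUnion hx (mem_ball_self hδ), hT hx⟩
  rintro y ⟨hy, hyS⟩
  obtain ⟨x, hx, hyx⟩ := mem_iUnion₂.1 hy
  by_cases h : y = x
  · exact h ▸ hx
  · exact absurd (mem_ball.1 hyx) (hS hyS (hT hx) h).not_gt

lemma frontier_biUnion_ball_inter_eq_empty (hδ : 0 < δ) (hS : S.Pairwise (δ < dist · ·))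
    (hT : T ⊆ S) (hTf : T.Finite) : frontier (⋃ x ∈ T, ball x δ) ∩ S = ∅ := by
  have hclosure : closure (⋃ x ∈ T, ball x δ) ⊆ ⋃ x ∈ T, closedBall x δ :=
    closure_minimal (iUnion₂_mono fun _ _ => ball_subset_closedBall)
      (hTf.isClosed_biUnion fun _ _ => isClosed_closedBall)
  rw [(isOpen_biUnion fun _ _ => isOpen_ball).frontier_eq]
  refine eq_empty_of_forall_notMem fun y ⟨⟨hyc, hyU⟩, hyS⟩ => hyU ?_
  obtain ⟨x, hx, hyx⟩ := mem_iUnion₂.1 (hclosure hyc)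
  by_cases h : y = x
  · exact mem_biUnion hx (h ▸ mem_ball_self hδ)
  · exact absurd (mem_closedBall.1 hyx) (hS hyS (hT hx) h).not_ge

end Separated

section Cover

variable {X ι : Type*} {A A' : ι → Set X} {S : Set X}

lemma inter_subset_of_pairwise_disjoint (hAA' : ∀ i, A i ⊆ A' i)
    (hdisj : Pairwise (Disjoint on A')) (hcov : S ⊆ ⋃ i, A i) (i : ι) : A' i ∩ S ⊆ A i := by
  rintro z ⟨hz, hzS⟩
  obtain ⟨j, hj⟩ := mem_iUnion.1 (hcov hzS)
  rcases eq_or_ne j i with rfl | hji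
  exacts [hj, absurd hz (disjoint_left.1 (hdisj hji) (hAA' j hj))]

variable [PseudoMetricSpace X] {δ : ℝ} {x : X}

lemma mem_of_mem_ball_inter (hnear : ∀ i, thickening δ (A i) ⊆ A' i) {i : ι} {z : X}
    (hz : z ∈ ball x δ) (hzA : z ∈ A i) : x ∈ A' i :=
  hnear i (mem_thickening_iff.2 ⟨z, hzA, mem_ball'.1 hz⟩)

lemma ball_inter_subset_of_mem (hdisj : Pairwise (Disjoint on A')) (hcov : S ⊆ ⋃ i, A i)
    (hnear : ∀ i, thickening δ (A i) ⊆ A' i) {i : ι} (hx : x ∈ A' i) : ball x δ ∩ S ⊆ A i := by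
  rintro z ⟨hz, hzS⟩
  obtain ⟨j, hj⟩ := mem_iUnion.1 (hcov hzS)
  rcases eq_or_ne j i with rfl | hji
  exacts [hj, absurd hx (disjoint_left.1 (hdisj hji) (mem_of_mem_ball_inter hnear hz hj))]

lemma ball_inter_subset_compl_of_notMem (hAA' : ∀ i, A i ⊆ A' i)
    (hdisj : Pairwise (Disjoint on A')) (hcov : S ⊆ ⋃ i, A i)
    (hnear : ∀ i, thickening δ (A i) ⊆ A' i) {i : ι} (hx : x ∉ A' i) :
    ball x δ ∩ S ⊆ (A' i)ᶜ := fun _ hz hzA' =>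
  hx (mem_of_mem_ball_inter hnear hz.1
    (inter_subset_of_pairwise_disjoint hAA' hdisj hcov i ⟨hzA', hz.2⟩))

lemma mem_iUnion_of_ball_inter_nonempty (hcov : S ⊆ ⋃ i, A i)
    (hnear : ∀ i, thickening δ (A i) ⊆ A' i) (h : (ball x δ ∩ S).Nonempty) : x ∈ ⋃ i, A' i := by
  obtain ⟨z, hz, hzS⟩ := h
  obtain ⟨i, hi⟩ := mem_iUnion.1 (hcov hzS)
  exact mem_iUnion.2 ⟨i, mem_of_mem_ball_inter hnear hz hi⟩

end Cover

namespace Pfin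

section FiniteSupport

variable {X : Type*} [MeasurableSpace X] [MeasurableSingletonClass X] (ν : Pfin X)

lemma exists_finset_measure_compl_eq_zero :
    ∃ S : Finset X, (ν.1 : Measure X) (↑S)ᶜ = 0 := by
  obtain ⟨S, hS⟩ := ν.2
  refine ⟨S, (prob_compl_eq_zero_iff S.measurableSet).2 ?_⟩
  rw [← ProbabilityMeasure.ennreal_coeFn_eq_coeFn_toMeasure, hS, ENNReal.coe_one]

lemma suppSet_finite_s8 : (suppSet ν.1).Finite := by
  obtain ⟨S, hS⟩ := ν.exists_finset_measure_compl_eq_zero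
  refine S.finite_toSet.subset fun x hx => ?_
  by_contra hxS
  exact hx ((ProbabilityMeasure.null_iff_toMeasure_null _ _).2
    (measure_mono_null (singleton_subset_iff.2 hxS) hS))

lemma measure_compl_suppSet : (ν.1 : Measure X) (suppSet ν.1)ᶜ = 0 := by
  obtain ⟨S, hS⟩ := ν.exists_finset_measure_compl_eq_zero
  have hnull : (ν.1 : Measure X) (↑S ∩ (suppSet ν.1)ᶜ) = 0 := by
    rw [← biUnion_of_singleton (↑S ∩ (suppSet ν.1)ᶜ),
      measure_biUnion_null_iff (S.finite_toSet.inter_of_left _).countable]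
    exact fun x hx => (ProbabilityMeasure.null_iff_toMeasure_null _ _).1 (not_not.1 hx.2)
  refine measure_mono_null (fun x hx => ?_) (measure_union_null hnull hS)
  by_cases hxS : x ∈ (↑S : Set X)
  exacts [Or.inl ⟨hxS, hx⟩, Or.inr hxS]

lemma apply_inter_suppSet (E : Set X) : ν.1 (E ∩ suppSet ν.1) = ν.1 E := by
  simp only [ProbabilityMeasure.coeFn_def, measure_inter_conull ν.measure_compl_suppSet]

lemma apply_le_of_inter_suppSet_subset {E F : Set X} (h : E ∩ suppSet ν.1 ⊆ F) :
    ν.1 E ≤ ν.1 F :=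
  ν.apply_inter_suppSet E ▸ ν.1.apply_mono h

end FiniteSupport

section WeakConvergence

variable {X : Type*} [MetricSpace X] [MeasurableSpace X] [OpensMeasurableSpace X]
  (μ : Pfin X) {δ : ℝ}

lemma eventually_lt_apply_biUnion_ball (hδ : 0 < δ)
    (hsep : (suppSet μ.1).Pairwise (δ < dist · ·)) {T : Set X} (hT : T ⊆ suppSet μ.1) {c : ℝ}
    (hc : c < μ.1 (⋃ x ∈ T, ball x δ)) : ∀ᶠ ν in 𝓝 μ, c < ν.1 (⋃ x ∈ T, ball x δ) := by
  have hfrontier : μ.1 (frontier (⋃ x ∈ T, ball x δ)) = 0 := by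
    rw [← μ.apply_inter_suppSet, frontier_biUnion_ball_inter_eq_empty hδ hsep hT
      (μ.suppSet_finite_s8.subset hT), ProbabilityMeasure.coeFn_empty]
  exact (NNReal.tendsto_coe.2 <| ProbabilityMeasure.tendsto_measure_of_null_frontier_of_tendsto
    (continuous_subtype_val.tendsto μ) hfrontier).eventually_const_lt hc

lemma eventually_ball_inter_suppSet_nonempty (hδ : 0 < δ)
    (hsep : (suppSet μ.1).Pairwise (δ < dist · ·)) :
    ∀ᶠ ν in 𝓝 μ, ∀ x ∈ suppSet μ.1, (ball x δ ∩ suppSet ν.1).Nonempty := by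
  refine (eventually_all_finite μ.suppSet_finite_s8).2 fun x hx => ?_
  have hpos : (0 : ℝ) < μ.1 (⋃ y ∈ ({x} : Set X), ball y δ) := by
    rw [biUnion_singleton]
    exact NNReal.coe_pos.2 <| (pos_iff_ne_zero.2 hx).trans_le
      (μ.1.apply_mono (singleton_subset_iff.2 (mem_ball_self hδ)))
  filter_upwards [μ.eventually_lt_apply_biUnion_ball hδ hsep (singleton_subset_iff.2 hx) hpos]
    with ν hν
  rw [biUnion_singleton, ← ν.apply_inter_suppSet] at hν
  by_contra h
  rw [not_nonempty_iff_eq_empty.1 h, ProbabilityMeasure.coeFn_empty] at hν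
  exact hν.false

lemma eventually_sub_lt_apply (hδ : 0 < δ)
    (hsep : (suppSet μ.1).Pairwise (δ < dist · ·)) {ε : ℝ} (hε : 0 < ε) :
    ∀ᶠ ν in 𝓝 μ, ∀ E : Set X, (∀ x ∈ suppSet μ.1 ∩ E, ball x δ ∩ suppSet ν.1 ⊆ E) →
      (μ.1 E : ℝ) - ε < ν.1 E := by
  filter_upwards [(eventually_all_finite μ.suppSet_finite_s8.powerset).2 fun T hT =>
    μ.eventually_lt_apply_biUnion_ball hδ hsep hT (sub_lt_self _ hε)] with ν hν E hE
  have hT : suppSet μ.1 ∩ E ⊆ suppSet μ.1 := inter_subset_left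
  have hμE : μ.1 E = μ.1 (⋃ x ∈ suppSet μ.1 ∩ E, ball x δ) := by
    rw [← μ.apply_inter_suppSet, ← μ.apply_inter_suppSet (⋃ x ∈ _, _),
      biUnion_ball_inter_eq hδ hsep hT, inter_comm]
  rw [hμE]
  refine (hν _ hT).trans_le (NNReal.coe_le_coe.2 (ν.apply_le_of_inter_suppSet_subset ?_))
  rintro z ⟨hz, hzν⟩
  obtain ⟨x, hx, hzx⟩ := mem_iUnion₂.1 hz
  exact hE x hx ⟨hzx, hzν⟩

end WeakConvergence

end Pfin

lemma MeasureTheory.ProbabilityMeasure.abs_sub_lt_of_sub_lt_of_sub_lt_compl {X : Type*}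
    [MeasurableSpace X] {μ ν : ProbabilityMeasure X} {E : Set X} {ε : ℝ} (hE : MeasurableSet E)
    (h : (μ E : ℝ) - ε < ν E) (hc : (μ Eᶜ : ℝ) - ε < ν Eᶜ) : |(μ E : ℝ) - ν E| < ε := by
  have hμ := probReal_compl_eq_one_sub (μ := (μ : Measure X)) hE
  have hν := probReal_compl_eq_one_sub (μ := (ν : Measure X)) hE
  simp only [ProbabilityMeasure.measureReal_eq_coe_coeFn] at hμ hν
  rw [abs_sub_lt_iff]
  constructor <;> linarith

lemma not_excludedBy_of_diam_le {r : ℝ} {Θ : Set S1} {θ : S1} (hΘ : diam Θ ≤ r) (hθ : θ ∈ Θ) :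
    ¬ ExcludedBy r Θ θ :=
  not_excludedBy_iff.2 fun _ hθ' => (dist_le_diam_of_mem isBounded_of_compactSpace hθ' hθ).trans hΘ

theorem extended_arc_masses_close_general (r : ℝ) (hrπ : r < Real.pi)
    (μ : Pfin S1) (ε : ℝ) (hε : 0 < ε) :
    ∀ᶠ ν in nhdsWithin μ (VRm r),
      ∀ (l : ℕ) (A A' : Fin (2 * l + 1) → Set S1),
        Function.Injective A → (∀ i, IsArc r (suppSet ν.1) (A i)) →
        (∀ B : Set S1, IsArc r (suppSet ν.1) B → ∃ i, B = A i) →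
        (∀ i, IsExtensionBy ((Real.pi - r) / 2) (A i) (A' i)) →
        (∀ i, ν.1 (A' i) = ν.1 (A i)) ∧
        (∀ i j, i ≠ j → Disjoint (A' i) (A' j)) ∧
        suppSet μ.1 ⊆ ⋃ i, A' i ∧
        (∀ i, |(μ.1 (A' i) : ℝ) - (ν.1 (A' i) : ℝ)| < ε) := by
  obtain ⟨δ, hδ, hδc, hsep⟩ :=
    μ.suppSet_finite_s8.exists_pos_le_pairwise_lt_dist (c := (π - r) / 2) (by linarith)
  filter_upwards [eventually_mem_nhdsWithin,
    nhdsWithin_le_nhds (μ.eventually_ball_inter_suppSet_nonempty hδ hsep),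
    nhdsWithin_le_nhds (μ.eventually_sub_lt_apply hδ hsep hε)] with ν hνr hball hmass
  intro l A A' hinj harc hall hext
  have hcov : suppSet ν.1 ⊆ ⋃ i, A i := fun y hy => by
    obtain ⟨B, hB, hyB⟩ := exists_isArc_mem hrπ hy (not_excludedBy_of_diam_le hνr hy)
    obtain ⟨i, rfl⟩ := hall B hB
    exact mem_iUnion.2 ⟨i, hyB⟩
  have hdisj : Pairwise (Disjoint on A') := fun i j hij =>
    (hext i).disjoint hrπ (hext j) (harc i) (harc j) (hinj.ne hij)
  have hAA' (i) : A i ⊆ A' i := (hext i).subset (by linarith)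
  have hnear (i) : thickening δ (A i) ⊆ A' i := (hext i).thickening_subset hδc
  refine ⟨fun i => le_antisymm ?_ (ν.1.apply_mono (hAA' i)), fun i j hij => hdisj hij,
    fun x hx => mem_iUnion_of_ball_inter_nonempty hcov hnear (hball x hx), fun i => ?_⟩
  · exact ν.apply_le_of_inter_suppSet_subset
      (inter_subset_of_pairwise_disjoint hAA' hdisj hcov i)
  · refine ProbabilityMeasure.abs_sub_lt_of_sub_lt_of_sub_lt_compl
      (hext i).isClosed.measurableSet (hmass _ fun x hx => ?_) (hmass _ fun x hx => ?_)
    · exact (ball_inter_subset_of_mem hdisj hcov hnear hx.2).trans (hAA' i)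
    · exact ball_inter_subset_compl_of_notMem hAA' hdisj hcov hnear hx.2

/-- Let `r ∈ [0,π)`, `k ≥ 0`, and `μ ∈ V_{2k+1}(r)`. For every `ε > 0`
and every `ν` in a sufficiently small neighborhood of `μ` in `VRm(S¹;r)`: if
`A_0, …, A_{2l}` are all the `(ν,r)`-arcs and each `A'_i` extends `A_i` by `(π−r)/2` at
both ends, then `ν(A'_i) = ν(A_i)`, the `A'_i` are pairwise disjoint, `supp μ ⊆ ⋃ᵢ A'_i`,
and `|μ(A'_i) − ν(A'_i)| < ε` for every `i`. -/
theorem extended_arc_masses_close (r : ℝ) (hr0 : 0 ≤ r) (hrπ : r < Real.pi) (k : ℕ)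
    (μ : Pfin S1) (hμ : μ ∈ V r k) (ε : ℝ) (hε : 0 < ε) :
    ∀ᶠ ν in nhdsWithin μ (VRm r),
      ∀ (l : ℕ) (A A' : Fin (2 * l + 1) → Set S1),
        Function.Injective A → (∀ i, IsArc r (suppSet ν.1) (A i)) →
        (∀ B : Set S1, IsArc r (suppSet ν.1) B → ∃ i, B = A i) →
        (∀ i, IsExtensionBy ((Real.pi - r) / 2) (A i) (A' i)) →
        (∀ i, ν.1 (A' i) = ν.1 (A i)) ∧
        (∀ i j, i ≠ j → Disjoint (A' i) (A' j)) ∧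
        suppSet μ.1 ⊆ ⋃ i, A' i ∧
        (∀ i, |(μ.1 (A' i) : ℝ) - (ν.1 (A' i) : ℝ)| < ε) :=
  extended_arc_masses_close_general r hrπ μ ε hε
end
end

section
/- Let k ≥ 1 and let r ∈ [2kπ/(2k+1), π). Then V_{2k+1}(r) is not closed in VRm(S¹;r) and V_{2k−1}(r) is not open in VRm(S¹;r). Indeed, the measures μ_n = (1/n)·δ_{[0]} + Σ_{j=1}^{2k} (1/(2k) − 1/(2kn))·δ_{[2jπ/(2k+1)]} lie in V_{2k+1}(r) for every n ≥ 2, and they converge in VRm(S¹;r) to Σ_{j=1}^{2k} (1/(2k))·δ_{[2jπ/(2k+1)]}, which lies in V_{2k−1}(r). -/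
open MeasureTheory Metric Filter
open scoped unitInterval NNReal

noncomputable section

/-!
Write `β = π / (2k+1)` (`halfStep k`) and `h = r - 2kβ` (`arcRadius k r`), so that `0 ≤ h < β`
and `π - r = β - h`. The support of `μ_n` (`n ≥ 2`) is the vertex set `{[2jβ]}` of a regular
`(2k+1)`-gon; that of the limit misses the vertex `[0]`. A point is excluded by a vertex exactly
when it lies within `β - h` of the antipode of that vertex, and the antipodes of the vertices are
the odd multiples of `β`. So for the full polygon the excluded points fill the gaps between the
`2k+1` arcs `[2jβ - h, 2jβ + h]`, and these are its arcs. Removing `[0]` frees the gap around its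
antipode `π = (2k+1)β`, and the arcs around `[2kβ]` and `[2(k+1)β]` merge: `2k - 1` arcs remain.
Since the mass `1/n` at `[0]` vanishes in the limit, `μ_n → μ` weakly, so points of `V_{2k+1}`
accumulate at a point of the disjoint set `V_{2k-1}`.
-/

open Set

namespace AddCircle

variable {p : ℝ}

lemma coe_eq_coe_iff_exists_int {x y : ℝ} :
    (x : AddCircle p) = y ↔ ∃ m : ℤ, y = x + m * p := by
  rw [← AddCommGroup.modEq_iff_eq_mod_zmultiples, AddCommGroup.modEq_iff_eq_add_zsmul]
  exact exists_congr fun m => by rw [zsmul_eq_mul]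

lemma dist_coe_le (x y : ℝ) : dist (x : AddCircle p) y ≤ |x - y| := by
  rw [dist_eq_norm, ← coe_sub]
  exact QuotientAddGroup.norm_mk_le_norm.trans_eq (Real.norm_eq_abs _)

end AddCircle

lemma excludedBy_of_antipode {r : ℝ} {Θ : Set S1} {a w : ℝ} (ha : (a : S1) ∈ Θ)
    (hw : |w| < Real.pi - r) : ExcludedBy r Θ ((a + Real.pi + w : ℝ) : S1) := by
  refine ⟨a, ha, ?_⟩
  have hanti : dist (a : S1) ((a + Real.pi : ℝ) : S1) = Real.pi := by
    have := AddCircle.norm_half_period_eq (p := 2 * Real.pi)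
    rw [abs_of_pos Real.two_pi_pos, show 2 * Real.pi / 2 = Real.pi by ring] at this
    rwa [dist_comm, dist_eq_norm, ← AddCircle.coe_sub, add_sub_cancel_left]
  have hw' := AddCircle.dist_coe_le (p := 2 * Real.pi) (a + Real.pi) (a + Real.pi + w)
  rw [show a + Real.pi - (a + Real.pi + w) = -w by ring, abs_neg] at hw'
  linarith [dist_triangle_right (a : S1) ((a + Real.pi : ℝ) : S1) ((a + Real.pi + w : ℝ) : S1)]

lemma IsClosedArc.subset_of_flanks {E : Set S1} {a b ε : ℝ} (hε : 0 < ε)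
    (hleft : ∀ s ∈ Ioo 0 ε, ((a - s : ℝ) : S1) ∈ E)
    (hright : ∀ s ∈ Ioo 0 ε, ((b + s : ℝ) : S1) ∈ E)
    {B : Set S1} (hB : IsClosedArc B) (hBE : Disjoint B E)
    (hmeet : (B ∩ (fun t : ℝ => (t : S1)) '' Icc a b).Nonempty) :
    B ⊆ (fun t : ℝ => (t : S1)) '' Icc a b := by
  obtain ⟨a', b', -, -, rfl⟩ := hB
  obtain ⟨-, ⟨p', hp', hpp⟩, ⟨p, hp, rfl⟩⟩ := hmeet
  obtain ⟨m, hm⟩ := AddCircle.coe_eq_coe_iff_exists_int.mp hpp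
  rintro - ⟨q, hq, rfl⟩
  -- translating `[a', b']` by `m` periods gives a lift of `B` through `p` and `q₀`
  set q₀ := q + m * (2 * Real.pi)
  have hlift : ∀ u ∈ uIcc p q₀, (u : S1) ∈ (fun t : ℝ => (t : S1)) '' Icc a' b' := by
    refine fun u hu => ⟨u - m * (2 * Real.pi), uIcc_subset_Icc hp' hq ?_,
      AddCircle.coe_eq_coe_iff_exists_int.mpr ⟨m, by ring⟩⟩
    rwa [← mem_preimage (f := fun x => x - m * (2 * Real.pi)), preimage_sub_const_uIcc, ← hm]
  by_contra hqA
  have hq₀ : ((q₀ : ℝ) : S1) = q := (AddCircle.coe_eq_coe_iff_exists_int.mpr ⟨m, rfl⟩).symm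
  rcases lt_or_ge b q₀ with hbq | hqb
  · set u := min q₀ (b + ε / 2)
    have hu : u - b ∈ Ioo 0 ε :=
      ⟨sub_pos.mpr (lt_min hbq (by linarith)), by linarith [min_le_right q₀ (b + ε / 2)]⟩
    refine hBE.ne_of_mem (hlift u (mem_uIcc_of_le ?_ (min_le_left _ _)))
      (by simpa using hright _ hu) rfl
    linarith [hp.2, lt_min hbq (by linarith : b < b + ε / 2)]
  rcases lt_or_ge q₀ a with hqa | haq
  · set u := max q₀ (a - ε / 2)
    have hu : a - u ∈ Ioo 0 ε :=
      ⟨sub_pos.mpr (max_lt hqa (by linarith)), by linarith [le_max_right q₀ (a - ε / 2)]⟩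
    refine hBE.ne_of_mem (hlift u (mem_uIcc_of_ge (le_max_left _ _) ?_))
      (by simpa using hleft _ hu) rfl
    linarith [hp.1, max_lt hqa (by linarith : a - ε / 2 < a)]
  exact hqA ⟨q₀, ⟨haq, hqb⟩, hq₀⟩

def IsIsolatedArc (r : ℝ) (Θ : Set S1) (A : Set S1) : Prop :=
  ∃ a b ε : ℝ, a ≤ b ∧ b < a + 2 * Real.pi ∧ 0 < ε ∧ A = (fun t : ℝ => (t : S1)) '' Icc a b ∧
    (∀ x ∈ A, ¬ ExcludedBy r Θ x) ∧
    ∀ s ∈ Ioo 0 ε, ExcludedBy r Θ ((a - s : ℝ) : S1) ∧ ExcludedBy r Θ ((b + s : ℝ) : S1)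

namespace IsIsolatedArc

variable {r : ℝ} {Θ A : Set S1}

lemma subset (hA : IsIsolatedArc r Θ A) {B : Set S1} (hB : IsClosedArc B)
    (hBΘ : ∀ x ∈ B, ¬ ExcludedBy r Θ x) (hBA : (B ∩ A).Nonempty) : B ⊆ A := by
  obtain ⟨a, b, ε, -, -, hε, rfl, -, hflanks⟩ := hA
  exact hB.subset_of_flanks (E := {x | ExcludedBy r Θ x}) hε (fun s hs => (hflanks s hs).1)
    (fun s hs => (hflanks s hs).2) (disjoint_left.mpr hBΘ) hBA

lemma isArc (hA : IsIsolatedArc r Θ A) (hAΘ : (A ∩ Θ).Nonempty) : IsArc r Θ A := by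
  obtain ⟨a, b, ε, hab, hba, -, rfl, hAex, -⟩ := id hA
  refine ⟨⟨a, b, hab, hba, rfl⟩, hAΘ, hAex, fun B hB _ hBex hAB => ?_⟩
  obtain ⟨x, hx, -⟩ := hAΘ
  exact hAB.antisymm (hA.subset hB hBex ⟨x, hAB hx, hx⟩)

end IsIsolatedArc

lemma setOf_isArc_eq {r : ℝ} {Θ : Set S1} {𝒜 : Set (Set S1)}
    (hiso : ∀ A ∈ 𝒜, IsIsolatedArc r Θ A) (hmeet : ∀ A ∈ 𝒜, (A ∩ Θ).Nonempty)
    (hcover : ∀ θ ∈ Θ, ∃ A ∈ 𝒜, θ ∈ A) : {A | IsArc r Θ A} = 𝒜 := by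
  ext A
  refine ⟨fun hA => ?_, fun hA => (hiso A hA).isArc (hmeet A hA)⟩
  obtain ⟨θ, hθA, hθ⟩ := hA.2.1
  obtain ⟨C, hC, hθC⟩ := hcover θ hθ
  have hAC := (hiso C hC).subset hA.1 hA.2.2.1 ⟨θ, hθA, hθC⟩
  have hCarc := (hiso C hC).isArc (hmeet C hC)
  rwa [hA.2.2.2 C hCarc.1 hCarc.2.1 hCarc.2.2.1 hAC]

section Measures

variable {X : Type*} [MeasurableSpace X]

lemma suppSet_eq (μ : ProbabilityMeasure X) : suppSet μ = {x | (μ : Measure X) {x} ≠ 0} := by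
  ext x
  exact (μ.null_iff_toMeasure_null {x}).not

def Pfin.ofFinite (μ : Measure X) {S : Set X} (hS : S.Finite) (hμ : ∀ T, S ⊆ T → μ T = 1) :
    Pfin X :=
  ⟨⟨μ, ⟨hμ univ (subset_univ S)⟩⟩, hS.toFinset, by simp [hμ]⟩

lemma Pfin.suppSet_ofFinite_subset [MeasurableSingletonClass X] (μ : Measure X) {S : Set X}
    (hS : S.Finite) (hμ : ∀ T, S ⊆ T → μ T = 1) : suppSet (Pfin.ofFinite μ hS hμ).1 ⊆ S := by
  have : IsProbabilityMeasure μ := ⟨hμ univ (subset_univ S)⟩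
  intro x hx
  by_contra hxS
  rw [suppSet_eq] at hx
  exact hx (measure_mono_null (singleton_subset_iff.mpr hxS)
    ((prob_compl_eq_zero_iff hS.measurableSet).mpr (hμ S subset_rfl)))

lemma ProbabilityMeasure.tendsto_of_eq_smul_add_smul [TopologicalSpace X]
    [OpensMeasurableSpace X] {ι : Type*} {l : Filter ι} {μs : ι → ProbabilityMeasure X}
    {μ : ProbabilityMeasure X} (ν : Measure X) [IsFiniteMeasure ν] {t : ι → ℝ≥0}
    (ht : Tendsto t l (nhds 0))
    (hμs : ∀ i, (μs i : Measure X) = t i • ν + (1 - t i) • (μ : Measure X)) :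
    Tendsto μs l (nhds μ) := by
  refine ProbabilityMeasure.tendsto_iff_forall_integral_tendsto.mpr fun f => ?_
  simp_rw [hμs, integral_add_measure (f.integrable _) (f.integrable _),
    integral_smul_nnreal_measure, NNReal.smul_def]
  have ht' := NNReal.tendsto_coe.mpr ht
  have h1t := NNReal.tendsto_coe.mpr ((tendsto_const_nhds (x := (1 : ℝ≥0))).sub ht)
  simpa using (ht'.smul_const (∫ x, f x ∂ν)).add (h1t.smul_const (∫ x, f x ∂(μ : Measure X)))

end Measures

lemma not_isClosed_and_not_isOpen_of_tendsto {X ι : Type*} [TopologicalSpace X] {l : Filter ι}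
    [l.NeBot] {s t : Set X} (hst : Disjoint s t) {u : ι → X} {x : X} (hu : Tendsto u l (nhds x))
    (hus : ∀ᶠ i in l, u i ∈ s) (hxt : x ∈ t) : ¬ IsClosed s ∧ ¬ IsOpen t :=
  ⟨fun hs => hst.notMem_of_mem_right hxt (hs.mem_of_tendsto hu hus), fun ht =>
    let ⟨_, hs, ht⟩ := (hus.and (hu (ht.mem_nhds hxt))).exists
    hst.notMem_of_mem_left hs ht⟩

lemma Int.exists_abs_le_and_dvd_sub (k : ℕ) (d : ℤ) :
    ∃ e : ℤ, |e| ≤ k ∧ (2 * k + 1 : ℤ) ∣ d - e := by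
  have hn : (0 : ℤ) < 2 * k + 1 := by positivity
  refine ⟨(d + k) % (2 * k + 1) - k, abs_le.mpr ⟨?_, ?_⟩, ⟨(d + k) / (2 * k + 1), ?_⟩⟩
  · linarith [Int.emod_nonneg (d + k) hn.ne']
  · linarith [Int.emod_lt_of_pos (d + k) hn]
  · linarith [Int.mul_ediv_add_emod (d + k) (2 * k + 1)]

namespace OddPolygon

def halfStep (k : ℕ) : ℝ := Real.pi / (2 * k + 1)

def vertex (k : ℕ) (j : ℤ) : S1 := ((2 * j * halfStep k : ℝ) : S1)

def nonzeroVertices (k : ℕ) : Set S1 := (fun j : ℕ => vertex k j) '' Icc 1 (2 * k)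

def vertices (k : ℕ) : Set S1 := insert (vertex k 0) (nonzeroVertices k)

def arcRadius (k : ℕ) (r : ℝ) : ℝ := r - 2 * k * halfStep k

def vertexArc (k : ℕ) (r : ℝ) (j : ℤ) : Set S1 :=
  (fun t : ℝ => (t : S1)) ''
    Icc (2 * j * halfStep k - arcRadius k r) (2 * j * halfStep k + arcRadius k r)

def mergedArc (k : ℕ) (r : ℝ) : Set S1 :=
  (fun t : ℝ => (t : S1)) ''
    Icc (2 * k * halfStep k - arcRadius k r) (2 * (k + 1) * halfStep k + arcRadius k r)

variable {k : ℕ} {r : ℝ}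

lemma halfStep_pos : 0 < halfStep k := div_pos Real.pi_pos (by positivity)

lemma mul_halfStep : (2 * k + 1) * halfStep k = Real.pi := by
  rw [halfStep, mul_div_cancel₀ _ (by positivity)]

lemma arcRadius_nonneg (hr1 : 2 * k * Real.pi / (2 * k + 1) ≤ r) : 0 ≤ arcRadius k r := by
  rw [arcRadius, halfStep, ← mul_div_assoc]
  linarith

lemma arcRadius_lt_halfStep (hrπ : r < Real.pi) : arcRadius k r < halfStep k := by
  rw [arcRadius]
  linarith [mul_halfStep (k := k)]

lemma vertex_natCast (j : ℕ) : vertex k j = ((2 * j * Real.pi / (2 * k + 1) : ℝ) : S1) := by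
  rw [vertex, halfStep, Int.cast_natCast, mul_div_assoc]

lemma vertex_eq_vertex_of_dvd {i j : ℤ} (h : (2 * k + 1 : ℤ) ∣ i - j) :
    vertex k i = vertex k j := by
  obtain ⟨m, hm⟩ := h
  refine (AddCircle.coe_eq_coe_iff_exists_int.mpr ⟨m, ?_⟩).symm
  have hm' : (i : ℝ) = j + (2 * k + 1) * m := by exact_mod_cast eq_add_of_sub_eq' hm
  rw [hm', ← mul_halfStep (k := k)]
  ring

lemma vertex_mem_nonzeroVertices {g : ℤ} (hg : ¬ (2 * k + 1 : ℤ) ∣ g) :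
    vertex k g ∈ nonzeroVertices k := by
  have hn : (0 : ℤ) < 2 * k + 1 := by positivity
  have h0 : g % (2 * k + 1) ≠ 0 := fun h => hg (Int.dvd_of_emod_eq_zero h)
  have h1 := Int.emod_nonneg g hn.ne'
  have h2 := Int.emod_lt_of_pos g hn
  refine ⟨(g % (2 * k + 1)).toNat, ⟨by omega, by omega⟩, ?_⟩
  show vertex k ((g % (2 * k + 1)).toNat : ℤ) = _
  rw [Int.toNat_of_nonneg h1]
  exact vertex_eq_vertex_of_dvd
    ⟨-(g / (2 * k + 1)), by linarith [Int.mul_ediv_add_emod g (2 * k + 1)]⟩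

lemma vertex_mem_nonzeroVertices_of_abs_le {g : ℤ} (h0 : g ≠ 0) (hg : |g| ≤ k) :
    vertex k g ∈ nonzeroVertices k :=
  vertex_mem_nonzeroVertices fun h => h0 (Int.eq_zero_of_abs_lt_dvd h (by omega))

lemma vertex_mem_vertices (g : ℤ) : vertex k g ∈ vertices k := by
  by_cases hg : (2 * k + 1 : ℤ) ∣ g
  · exact .inl (vertex_eq_vertex_of_dvd (by simpa using hg))
  · exact .inr (vertex_mem_nonzeroVertices hg)

lemma vertices_subset_range : vertices k ⊆ range (vertex k) := by
  rintro _ (rfl | ⟨j, -, rfl⟩) <;> exact mem_range_self _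

lemma nonzeroVertices_finite : (nonzeroVertices k).Finite :=
  (finite_Icc 1 (2 * k)).image _

lemma vertices_finite : (vertices k).Finite :=
  nonzeroVertices_finite.insert _

lemma dist_vertex_le (i j : ℤ) {u : ℝ} (hu : |u| ≤ arcRadius k r) :
    dist (vertex k i) ((2 * j * halfStep k + u : ℝ) : S1) ≤ r := by
  obtain ⟨e, he, hdvd⟩ := Int.exists_abs_le_and_dvd_sub k (i - j)
  rw [vertex_eq_vertex_of_dvd (j := j + e) (by rwa [← sub_sub]), vertex]
  refine (AddCircle.dist_coe_le _ _).trans ?_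
  have he' : |(e : ℝ)| ≤ k := by exact_mod_cast he
  have hβ := halfStep_pos (k := k)
  calc |2 * ((j + e : ℤ) : ℝ) * halfStep k - (2 * j * halfStep k + u)|
      = |2 * e * halfStep k - u| := by push_cast; ring_nf
    _ ≤ 2 * |(e : ℝ)| * halfStep k + |u| := by
      refine (abs_sub _ _).trans_eq ?_
      rw [abs_mul, abs_mul, abs_two, abs_of_pos hβ]
    _ ≤ 2 * k * halfStep k + arcRadius k r := by gcongr
    _ = r := by rw [arcRadius]; ring

lemma dist_vertex_le_of_mem_mergedArc {i : ℕ} (hi : i ∈ Icc 1 (2 * k)) {x : S1}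
    (hx : x ∈ mergedArc k r) : dist (vertex k i) x ≤ r := by
  obtain ⟨v, ⟨hv₁, hv₂⟩, rfl⟩ := hx
  have hβ := halfStep_pos (k := k)
  have h₁ : 1 * halfStep k ≤ i * halfStep k := by gcongr; exact_mod_cast hi.1
  have h₂ : i * halfStep k ≤ (2 * k) * halfStep k := by gcongr; exact_mod_cast hi.2
  rw [arcRadius] at hv₁ hv₂
  refine (AddCircle.dist_coe_le _ _).trans (abs_le.mpr ⟨?_, ?_⟩) <;>
    · push_cast
      linarith

lemma diam_le_of_subset_vertices (hh : 0 ≤ arcRadius k r) {s : Set S1} (hs : s ⊆ vertices k) :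
    Metric.diam s ≤ r := by
  have hr : 0 ≤ r := by
    rw [arcRadius] at hh
    nlinarith [halfStep_pos (k := k)]
  refine Metric.diam_le_of_forall_dist_le hr fun x hx y hy => ?_
  obtain ⟨i, rfl⟩ := vertices_subset_range (hs hx)
  obtain ⟨j, rfl⟩ := vertices_subset_range (hs hy)
  simpa [vertex] using dist_vertex_le (r := r) i j (u := 0) (by simpa using hh)

lemma excludedBy_right_of_vertexArc {Θ : Set S1} {j : ℤ} (hg : vertex k (j - k) ∈ Θ) {s : ℝ}
    (hs : s ∈ Ioo 0 (2 * (Real.pi - r))) :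
    ExcludedBy r Θ ((2 * j * halfStep k + arcRadius k r + s : ℝ) : S1) := by
  convert excludedBy_of_antipode (r := r) (w := s - (Real.pi - r)) hg
    (abs_lt.mpr ⟨by linarith [hs.1], by linarith [hs.2]⟩) using 2
  rw [arcRadius]
  push_cast
  ring

lemma excludedBy_left_of_vertexArc {Θ : Set S1} {j : ℤ} (hg : vertex k (j - k - 1) ∈ Θ)
    {s : ℝ} (hs : s ∈ Ioo 0 (2 * (Real.pi - r))) :
    ExcludedBy r Θ ((2 * j * halfStep k - arcRadius k r - s : ℝ) : S1) := by
  convert excludedBy_of_antipode (r := r) (w := Real.pi - r - s) hg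
    (abs_lt.mpr ⟨by linarith [hs.2], by linarith [hs.1]⟩) using 2
  rw [arcRadius]
  push_cast
  linear_combination 2 * mul_halfStep (k := k)

lemma vertex_mem_vertexArc (hh : 0 ≤ arcRadius k r) (j : ℤ) : vertex k j ∈ vertexArc k r j :=
  ⟨2 * j * halfStep k, ⟨by linarith, by linarith⟩, rfl⟩

lemma vertex_mem_mergedArc (hh : 0 ≤ arcRadius k r) {j : ℕ} (hj : j = k ∨ j = k + 1) :
    vertex k j ∈ mergedArc k r := by
  have hβ := halfStep_pos (k := k)
  refine ⟨2 * j * halfStep k, ⟨?_, ?_⟩, by simp [vertex]⟩ <;>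
    rcases hj with rfl | rfl <;> push_cast <;> linarith

lemma dvd_sub_of_vertex_mem_vertexArc (hrπ : r < Real.pi) {i j : ℤ}
    (h : vertex k i ∈ vertexArc k r j) : (2 * k + 1 : ℤ) ∣ i - j := by
  obtain ⟨v, ⟨hv₁, hv₂⟩, hvi⟩ := h
  obtain ⟨m, hm⟩ := AddCircle.coe_eq_coe_iff_exists_int.mp hvi
  have hβ := halfStep_pos (k := k)
  have hhβ := arcRadius_lt_halfStep (k := k) hrπ
  refine ⟨m, ?_⟩
  set d := i - j - (2 * k + 1) * m
  have hd : 2 * (d : ℝ) * halfStep k = v - 2 * j * halfStep k := by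
    rw [← mul_halfStep (k := k)] at hm
    push_cast [d]
    linear_combination hm
  have hd₁ : 2 * (d : ℝ) < 1 := lt_of_mul_lt_mul_right (by linarith) hβ.le
  have hd₂ : -1 < 2 * (d : ℝ) := lt_of_mul_lt_mul_right (by linarith) hβ.le
  have : d = 0 := by
    have : 2 * d < 1 := by exact_mod_cast hd₁
    have : -1 < 2 * d := by exact_mod_cast hd₂
    omega
  linarith

lemma vertexArc_injOn (hh : 0 ≤ arcRadius k r) (hrπ : r < Real.pi) :
    InjOn (fun j : ℕ => vertexArc k r j) (Iic (2 * k)) := by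
  intro i hi j hj hij
  simp only [mem_Iic] at hi hj
  have hmem : vertex k i ∈ vertexArc k r j := by
    rw [← show vertexArc k r i = vertexArc k r j from hij]
    exact vertex_mem_vertexArc hh i
  have := Int.eq_zero_of_abs_lt_dvd (dvd_sub_of_vertex_mem_vertexArc hrπ hmem)
    (abs_lt.mpr ⟨by omega, by omega⟩)
  omega

lemma isIsolatedArc_vertexArc {Θ : Set S1} (hΘ : Θ ⊆ range (vertex k)) {j : ℤ}
    (hR : vertex k (j - k) ∈ Θ) (hL : vertex k (j - k - 1) ∈ Θ)
    (hh : 0 ≤ arcRadius k r) (hrπ : r < Real.pi) : IsIsolatedArc r Θ (vertexArc k r j) := by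
  have hβ := halfStep_pos (k := k)
  refine ⟨_, _, 2 * (Real.pi - r), by linarith, ?_, by linarith, rfl, ?_,
    fun s hs => ⟨excludedBy_left_of_vertexArc hL hs, excludedBy_right_of_vertexArc hR hs⟩⟩
  · have : arcRadius k r < Real.pi := by rw [arcRadius]; nlinarith
    linarith
  · rintro _ ⟨v, hv, rfl⟩ ⟨_, hθ, hd⟩
    obtain ⟨i, rfl⟩ := hΘ hθ
    have := dist_vertex_le (r := r) i j (u := v - 2 * j * halfStep k)
      (abs_le.mpr ⟨by linarith [hv.1], by linarith [hv.2]⟩)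
    rw [add_sub_cancel] at this
    exact this.not_gt hd

lemma isIsolatedArc_mergedArc (hk : 1 ≤ k) (hh : 0 ≤ arcRadius k r) (hrπ : r < Real.pi) :
    IsIsolatedArc r (nonzeroVertices k) (mergedArc k r) := by
  have hβ := halfStep_pos (k := k)
  have hhβ := arcRadius_lt_halfStep (k := k) hrπ
  have hk' : (1 : ℝ) ≤ k := by exact_mod_cast hk
  refine ⟨_, _, 2 * (Real.pi - r), by nlinarith, ?_, by linarith, rfl, ?_,
    fun s hs => ⟨?_, ?_⟩⟩
  · nlinarith [mul_halfStep (k := k)]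
  · rintro x hx ⟨_, ⟨i, hi, rfl⟩, hd⟩
    exact (dist_vertex_le_of_mem_mergedArc hi hx).not_gt hd
  · have hg : vertex k ((k : ℤ) - k - 1) ∈ nonzeroVertices k :=
      vertex_mem_nonzeroVertices_of_abs_le (by omega) (by simpa using hk)
    simpa using excludedBy_left_of_vertexArc hg hs
  · have hg : vertex k (((k + 1 : ℕ) : ℤ) - k) ∈ nonzeroVertices k :=
      vertex_mem_nonzeroVertices_of_abs_le (by omega) (by simpa using hk)
    simpa using excludedBy_right_of_vertexArc hg hs

lemma setOf_isArc_vertices (hh : 0 ≤ arcRadius k r) (hrπ : r < Real.pi) :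
    {A | IsArc r (vertices k) A} = (fun j : ℕ => vertexArc k r j) '' Iic (2 * k) := by
  refine setOf_isArc_eq ?_ ?_ ?_
  · rintro _ ⟨j, -, rfl⟩
    exact isIsolatedArc_vertexArc vertices_subset_range (vertex_mem_vertices _)
      (vertex_mem_vertices _) hh hrπ
  · rintro _ ⟨j, -, rfl⟩
    exact ⟨_, vertex_mem_vertexArc hh j, vertex_mem_vertices j⟩
  · rintro _ (rfl | ⟨j, hj, rfl⟩)
    · exact ⟨_, ⟨0, by simp, rfl⟩, vertex_mem_vertexArc hh 0⟩
    · exact ⟨_, ⟨j, hj.2, rfl⟩, vertex_mem_vertexArc hh j⟩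

lemma setOf_isArc_nonzeroVertices (hk : 1 ≤ k) (hh : 0 ≤ arcRadius k r) (hrπ : r < Real.pi) :
    {A | IsArc r (nonzeroVertices k) A} =
      insert (mergedArc k r) ((fun j : ℕ => vertexArc k r j) '' (Icc 1 (2 * k) \ {k, k + 1})) := by
  refine setOf_isArc_eq ?_ ?_ ?_
  · rintro _ (rfl | ⟨j, ⟨⟨hj₁, hj₂⟩, hjk⟩, rfl⟩)
    · exact isIsolatedArc_mergedArc hk hh hrπ
    · simp only [mem_insert_iff, mem_singleton_iff, not_or] at hjk
      refine isIsolatedArc_vertexArc ?_ ?_ ?_ hh hrπ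
      · rintro _ ⟨i, -, rfl⟩
        exact mem_range_self _
      · exact vertex_mem_nonzeroVertices_of_abs_le (by omega) (abs_le.mpr ⟨by omega, by omega⟩)
      · exact vertex_mem_nonzeroVertices_of_abs_le (by omega) (abs_le.mpr ⟨by omega, by omega⟩)
  · rintro _ (rfl | ⟨j, ⟨hj, -⟩, rfl⟩)
    · exact ⟨_, vertex_mem_mergedArc hh (.inl rfl), ⟨k, ⟨hk, by omega⟩, rfl⟩⟩
    · exact ⟨_, vertex_mem_vertexArc hh j, ⟨j, hj, rfl⟩⟩
  · rintro _ ⟨j, hj, rfl⟩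
    by_cases hjk : j = k ∨ j = k + 1
    · exact ⟨_, .inl rfl, vertex_mem_mergedArc hh hjk⟩
    · refine ⟨_, .inr ⟨j, ⟨hj, ?_⟩, rfl⟩, vertex_mem_vertexArc hh j⟩
      simpa using hjk

lemma arcsCount_vertices (hh : 0 ≤ arcRadius k r) (hrπ : r < Real.pi) :
    arcsCount r (vertices k) = 2 * k + 1 := by
  rw [arcsCount, setOf_isArc_vertices hh hrπ, (vertexArc_injOn hh hrπ).ncard_image,
    ncard_Iic_nat]

lemma arcsCount_nonzeroVertices (hk : 1 ≤ k) (hh : 0 ≤ arcRadius k r) (hrπ : r < Real.pi) :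
    arcsCount r (nonzeroVertices k) = 2 * (k - 1) + 1 := by
  have hsub : Icc 1 (2 * k) \ {k, k + 1} ⊆ Iic (2 * k) := fun j hj => hj.1.2
  have hpair : {k, k + 1} ⊆ Icc 1 (2 * k) := by
    rintro _ (rfl | rfl) <;> exact ⟨by omega, by omega⟩
  have hnotMem :
      mergedArc k r ∉ (fun j : ℕ => vertexArc k r j) '' (Icc 1 (2 * k) \ {k, k + 1}) := by
    rintro ⟨j, ⟨⟨hj₁, hj₂⟩, hjk⟩, hEq⟩
    simp only [mem_insert_iff, mem_singleton_iff, not_or] at hjk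
    have hdvd := dvd_sub_of_vertex_mem_vertexArc hrπ (hEq ▸ vertex_mem_mergedArc hh (.inl rfl))
    have := Int.eq_zero_of_abs_lt_dvd hdvd (abs_lt.mpr ⟨by omega, by omega⟩)
    omega
  rw [arcsCount, setOf_isArc_nonzeroVertices hk hh hrπ, ncard_insert_of_notMem hnotMem,
    ((vertexArc_injOn hh hrπ).mono hsub).ncard_image, ncard_sdiff hpair, ncard_pair (by omega),
    ncard_Icc_nat]
  omega

def limitMeasure (k : ℕ) : Measure S1 :=
  ∑ j ∈ Finset.Icc 1 (2 * k), ((2 * k : ℝ≥0))⁻¹ • Measure.dirac (vertex k j)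

def approxMeasure (k n : ℕ) : Measure S1 :=
  ((n : ℝ≥0))⁻¹ • Measure.dirac (vertex k 0) + (1 - (n : ℝ≥0)⁻¹) • limitMeasure k

lemma limitMeasure_eq (k : ℕ) : limitMeasure k = ∑ j ∈ Finset.Icc 1 (2 * k),
    ((2 * k : ℝ≥0))⁻¹ • Measure.dirac ((2 * j * Real.pi / (2 * k + 1) : ℝ) : S1) := by
  simp only [limitMeasure, vertex_natCast]

lemma approxMeasure_eq (k n : ℕ) : approxMeasure k n =
    ((n : ℝ≥0))⁻¹ • Measure.dirac ((0 : ℝ) : S1) + ∑ j ∈ Finset.Icc 1 (2 * k),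
      (((2 * k : ℝ≥0))⁻¹ - ((2 * k * n : ℝ≥0))⁻¹) •
        Measure.dirac ((2 * j * Real.pi / (2 * k + 1) : ℝ) : S1) := by
  have hcoeff : (1 - (n : ℝ≥0)⁻¹) * ((2 * k : ℝ≥0))⁻¹ =
      ((2 * k : ℝ≥0))⁻¹ - ((2 * k * n : ℝ≥0))⁻¹ := by
    rw [tsub_mul, one_mul, ← mul_inv, mul_comm (n : ℝ≥0)]
  simp only [approxMeasure, limitMeasure_eq, Finset.smul_sum, smul_smul, hcoeff]
  simp [vertex]

lemma limitMeasure_apply_of_subset (hk : 1 ≤ k) {S : Set S1} (hS : nonzeroVertices k ⊆ S) :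
    limitMeasure k S = 1 := by
  have hmem : ∀ j ∈ Finset.Icc 1 (2 * k), vertex k j ∈ S := fun j hj =>
    hS ⟨j, Finset.mem_Icc.mp hj, rfl⟩
  simp only [limitMeasure, Measure.finsetSum_apply, Measure.smul_apply]
  rw [Finset.sum_congr rfl fun j hj => by rw [Measure.dirac_apply_of_mem (hmem j hj)]]
  simp only [ENNReal.smul_def, smul_eq_mul, mul_one]
  rw [← ENNReal.ofNNReal_finsetSum, Finset.sum_const, Nat.card_Icc, nsmul_eq_mul,
    ENNReal.coe_eq_one, Nat.add_sub_cancel]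
  push_cast
  exact mul_inv_cancel₀ (by positivity)

lemma approxMeasure_apply_of_subset (hk : 1 ≤ k) (n : ℕ) {S : Set S1} (hS : vertices k ⊆ S) :
    approxMeasure k n S = 1 := by
  rw [approxMeasure, Measure.add_apply, Measure.smul_apply, Measure.smul_apply,
    Measure.dirac_apply_of_mem (hS (mem_insert _ _)),
    limitMeasure_apply_of_subset hk ((subset_insert _ _).trans hS)]
  simp only [ENNReal.smul_def, smul_eq_mul, mul_one]
  rw [← ENNReal.coe_add, add_tsub_cancel_of_le (Nat.cast_inv_le_one n), ENNReal.coe_one]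

lemma limitMeasure_singleton_ne_zero {y : S1} (hy : y ∈ nonzeroVertices k) :
    limitMeasure k {y} ≠ 0 := by
  obtain ⟨j, ⟨hj₁, hj₂⟩, rfl⟩ := hy
  simp only [limitMeasure, Measure.finsetSum_apply, Measure.smul_apply, ne_eq,
    Finset.sum_eq_zero_iff, not_forall]
  exact ⟨j, Finset.mem_Icc.mpr ⟨hj₁, hj₂⟩, by simp [show k ≠ 0 by omega]⟩

lemma approxMeasure_singleton_ne_zero {n : ℕ} (hn : 2 ≤ n) {y : S1} (hy : y ∈ vertices k) :
    approxMeasure k n {y} ≠ 0 := by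
  simp only [approxMeasure, Measure.add_apply, Measure.smul_apply, ne_eq, add_eq_zero,
    not_and_or]
  rcases hy with rfl | hy
  · left
    simp [show n ≠ 0 by omega]
  · right
    refine smul_ne_zero (tsub_pos_of_lt (inv_lt_one_of_one_lt₀ ?_)).ne'
      (limitMeasure_singleton_ne_zero hy)
    exact_mod_cast hn

def approxPfin (hk : 1 ≤ k) (n : ℕ) : Pfin S1 :=
  Pfin.ofFinite (approxMeasure k n) vertices_finite fun _ hT =>
    approxMeasure_apply_of_subset hk n hT

def limitPfin (hk : 1 ≤ k) : Pfin S1 :=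
  Pfin.ofFinite (limitMeasure k) nonzeroVertices_finite fun _ hT =>
    limitMeasure_apply_of_subset hk hT

lemma suppSet_approxPfin (hk : 1 ≤ k) {n : ℕ} (hn : 2 ≤ n) :
    suppSet (approxPfin hk n).1 = vertices k :=
  (Pfin.suppSet_ofFinite_subset _ _ _).antisymm fun y hy => by
    rw [suppSet_eq]
    exact approxMeasure_singleton_ne_zero hn hy

lemma suppSet_limitPfin (hk : 1 ≤ k) : suppSet (limitPfin hk).1 = nonzeroVertices k :=
  (Pfin.suppSet_ofFinite_subset _ _ _).antisymm fun y hy => by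
    rw [suppSet_eq]
    exact limitMeasure_singleton_ne_zero hy

lemma tendsto_approxPfin (hk : 1 ≤ k) :
    Tendsto (approxPfin hk) atTop (nhds (limitPfin hk)) :=
  tendsto_subtype_rng.mpr <| ProbabilityMeasure.tendsto_of_eq_smul_add_smul
    (Measure.dirac (vertex k 0)) tendsto_inv_atTop_nhds_zero_nat fun _ => rfl

lemma approxPfin_mem_VRm (hk : 1 ≤ k) (hh : 0 ≤ arcRadius k r) (n : ℕ) :
    approxPfin hk n ∈ VRm r :=
  diam_le_of_subset_vertices hh (Pfin.suppSet_ofFinite_subset _ _ _)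

lemma approxPfin_mem_V (hk : 1 ≤ k) (hh : 0 ≤ arcRadius k r) (hrπ : r < Real.pi) {n : ℕ}
    (hn : 2 ≤ n) : approxPfin hk n ∈ V r k := by
  refine ⟨approxPfin_mem_VRm hk hh n, ?_⟩
  rw [arcsCountM, suppSet_approxPfin hk hn, arcsCount_vertices hh hrπ]

lemma limitPfin_mem_V (hk : 1 ≤ k) (hh : 0 ≤ arcRadius k r) (hrπ : r < Real.pi) :
    limitPfin hk ∈ V r (k - 1) := by
  refine ⟨?_, ?_⟩
  · exact diam_le_of_subset_vertices hh ((suppSet_limitPfin hk).trans_subset (subset_insert _ _))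
  · rw [arcsCountM, suppSet_limitPfin hk, arcsCount_nonzeroVertices hk hh hrπ]

end OddPolygon

open OddPolygon in
/-- For `k ≥ 1` and `r ∈ [2kπ/(2k+1), π)`, `V_{2k+1}(r)` is not closed
in `VRm(S¹;r)` and `V_{2k−1}(r)` is not open in `VRm(S¹;r)`. Indeed, the measures
`μ_n = (1/n)δ_{[0]} + Σ_{j=1}^{2k} (1/(2k) − 1/(2kn)) δ_{[2jπ/(2k+1)]}` lie in
`V_{2k+1}(r)` for `n ≥ 2` and converge to `Σ_{j=1}^{2k} (1/(2k)) δ_{[2jπ/(2k+1)]}`,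
which lies in `V_{2k−1}(r)`. -/
theorem V_not_closed_not_open (k : ℕ) (hk : 1 ≤ k) (r : ℝ)
    (hr1 : 2 * k * Real.pi / (2 * k + 1) ≤ r) (hrπ : r < Real.pi) :
    ∃ (μseq : ℕ → Pfin S1) (μlim : Pfin S1),
      (∀ n : ℕ, ((μseq n).1 : Measure S1) =
          ((n : ℝ≥0))⁻¹ • MeasureTheory.Measure.dirac ((0 : ℝ) : S1) +
          ∑ j ∈ Finset.Icc 1 (2 * k),
            (((2 * k : ℝ≥0))⁻¹ - ((2 * k * n : ℝ≥0))⁻¹) •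
              MeasureTheory.Measure.dirac ((2 * j * Real.pi / (2 * k + 1) : ℝ) : S1)) ∧
      ((μlim.1 : Measure S1) =
          ∑ j ∈ Finset.Icc 1 (2 * k),
            ((2 * k : ℝ≥0))⁻¹ •
              MeasureTheory.Measure.dirac ((2 * j * Real.pi / (2 * k + 1) : ℝ) : S1)) ∧
      (∀ n : ℕ, 2 ≤ n → μseq n ∈ V r k) ∧
      Filter.Tendsto μseq Filter.atTop (nhds μlim) ∧
      μlim ∈ V r (k - 1) ∧
      ¬ IsClosed {ν : ↥(VRm r) | (ν : Pfin S1) ∈ V r k} ∧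
      ¬ IsOpen {ν : ↥(VRm r) | (ν : Pfin S1) ∈ V r (k - 1)} := by
  have hh := arcRadius_nonneg hr1
  have hseq : ∀ n, 2 ≤ n → approxPfin hk n ∈ V r k := fun n => approxPfin_mem_V hk hh hrπ
  have hlim := limitPfin_mem_V hk hh hrπ
  have hdisj : Disjoint {ν : ↥(VRm r) | (ν : Pfin S1) ∈ V r k}
      {ν : ↥(VRm r) | (ν : Pfin S1) ∈ V r (k - 1)} :=
    disjoint_left.mpr fun ν h₁ h₂ => by have := h₁.2.symm.trans h₂.2; omega
  obtain ⟨hnotClosed, hnotOpen⟩ := not_isClosed_and_not_isOpen_of_tendsto hdisj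
    (u := fun n => ⟨approxPfin hk n, approxPfin_mem_VRm hk hh n⟩) (x := ⟨limitPfin hk, hlim.1⟩)
    (tendsto_subtype_rng.mpr (tendsto_approxPfin hk)) (eventually_atTop.mpr ⟨2, hseq⟩) hlim
  exact ⟨approxPfin hk, limitPfin hk, approxMeasure_eq k, limitMeasure_eq k, hseq,
    tendsto_approxPfin hk, hlim, hnotClosed, hnotOpen⟩
end
end
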